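/- arXiv:1902.02413 — 8 statements merged into one kernel-verified Lean document; each statement's English description precedes it below -/
import Mathlib

section
/- Let O be a finite nonempty type and p₁, …, p_n probability distributions on O (n ≥ 1). Then there exists a maximal coupling of p₁, …, p_n, and for every maximal coupling q the value of the maximized probability is q({a ∈ Oⁿ : a₁ = a₂ = ⋯ = a_n}) = ∑_{o ∈ O} min_{1 ≤ j ≤ n} p_j(o). -/
/-- A probability distribution on a finite type `S`. -/
def IsProbDist {S : Type*} [Fintype S] (p : S → ℝ) : Prop :=
  (∀ s, 0 ≤ p s) ∧ ∑ s, p s = 1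

/-- `q` is a coupling of the distributions `p 0, …, p (n-1)` on `O`:
a probability distribution on `Fin n → O` whose `j`-th one-variable marginal is `p j`. -/
def IsCoupling {O : Type*} [Fintype O] [DecidableEq O] {n : ℕ}
    (p : Fin n → O → ℝ) (q : (Fin n → O) → ℝ) : Prop :=
  IsProbDist q ∧ ∀ (j : Fin n) (o : O), (∑ a : Fin n → O, if a j = o then q a else 0) = p j o

/-- The probability, under a distribution `q` on `Fin n → O`, that all coordinates
are equal. -/
noncomputable def diagProb {O : Type*} [Fintype O] [DecidableEq O] {n : ℕ}
    (q : (Fin n → O) → ℝ) : ℝ :=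
  ∑ a : Fin n → O, if ∀ i j, a i = a j then q a else 0

section aux
variable {O : Type*} [Fintype O] [DecidableEq O] {n : ℕ}

omit [DecidableEq O] in
lemma sum_prod_eq (g : Fin n → O → ℝ) :
    ∑ a : Fin n → O, ∏ j, g j (a j) = ∏ j, ∑ o, g j o :=
  (Fintype.prod_sum _).symm

lemma sum_prod_cond (g : Fin n → O → ℝ) (j : Fin n) (o : O) :
    ∑ a : Fin n → O, (if a j = o then ∏ k, g k (a k) else 0)
      = g j o * ∏ k ∈ Finset.univ.erase j, (∑ o', g k o') := by
  classical
  set g' : Fin n → O → ℝ :=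
    Function.update g j (fun o' => if o' = o then g j o' else 0) with hg'
  have key : ∀ a : Fin n → O,
      (if a j = o then ∏ k, g k (a k) else 0) = ∏ k, g' k (a k) := by
    intro a
    rw [← Finset.mul_prod_erase Finset.univ (fun k => g' k (a k)) (Finset.mem_univ j)]
    have h1 : ∀ k ∈ Finset.univ.erase j, g' k (a k) = g k (a k) := by
      intro k hk
      rw [hg', Function.update_of_ne (Finset.mem_erase.mp hk).1]
    rw [Finset.prod_congr rfl h1]
    have h2 : g' j (a j) = if a j = o then g j (a j) else 0 := by
      rw [hg', Function.update_self]
    rw [h2]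
    by_cases h : a j = o
    · rw [if_pos h, if_pos h, ← Finset.mul_prod_erase Finset.univ
        (fun k => g k (a k)) (Finset.mem_univ j)]
    · rw [if_neg h, if_neg h, zero_mul]
  rw [Finset.sum_congr rfl fun a _ => key a, sum_prod_eq]
  rw [← Finset.mul_prod_erase Finset.univ (fun k => ∑ o', g' k o') (Finset.mem_univ j)]
  congr 1
  · rw [hg', Function.update_self]
    simp
  · apply Finset.prod_congr rfl
    intro k hk
    apply Finset.sum_congr rfl
    intro o' _
    rw [hg', Function.update_of_ne (Finset.mem_erase.mp hk).1]

lemma sum_diag_eq (hn : 1 ≤ n) (f : (Fin n → O) → ℝ)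
    (hf : ∀ a, ¬ (∀ i j, a i = a j) → f a = 0) :
    ∑ a, f a = ∑ o, f (fun _ => o) := by
  classical
  have hinj : ∀ x ∈ (Finset.univ : Finset O), ∀ y ∈ Finset.univ,
      (fun o : O => (fun _ : Fin n => o)) x = (fun o : O => (fun _ : Fin n => o)) y → x = y := by
    intro x _ y _ h
    exact congrFun h ⟨0, hn⟩
  rw [← Finset.sum_image (f := f) hinj]
  symm
  apply Finset.sum_subset (Finset.subset_univ _)
  intro a _ ha
  apply hf
  intro hc
  apply ha
  rw [Finset.mem_image]
  exact ⟨a ⟨0, hn⟩, Finset.mem_univ _, by funext i; exact (hc _ _)⟩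

end aux

/-- maximal couplings exist, and every maximal coupling `q` of
`p 1, …, p n` satisfies `q(a₁ = ⋯ = a_n) = ∑ o, min_j p j o`. -/
theorem maximal_coupling_exists_and_value {O : Type*} [Fintype O] [DecidableEq O] [Nonempty O]
    {n : ℕ} (hn : 1 ≤ n) (p : Fin n → O → ℝ) (hp : ∀ j, IsProbDist (p j)) :
    (∃ q, IsCoupling p q ∧ ∀ q', IsCoupling p q' → diagProb q' ≤ diagProb q) ∧
    (∀ q, IsCoupling p q → (∀ q', IsCoupling p q' → diagProb q' ≤ diagProb q) →
      diagProb q = ∑ o : O,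
        Finset.univ.inf' (Finset.univ_nonempty_iff.mpr ⟨⟨0, hn⟩⟩) fun j => p j o) := by
  classical
  have hne : (Finset.univ : Finset (Fin n)).Nonempty := Finset.univ_nonempty_iff.mpr ⟨⟨0, hn⟩⟩
  set m : O → ℝ := fun o => Finset.univ.inf' hne (fun j => p j o) with hmdef
  have hm_le : ∀ j o, m o ≤ p j o := fun j o => Finset.inf'_le _ (Finset.mem_univ j)
  have hm_ex : ∀ o, ∃ j, m o = p j o := by
    intro o
    obtain ⟨j, _, hj⟩ := Finset.exists_mem_eq_inf' hne (fun j => p j o)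
    exact ⟨j, hj⟩
  have hm_nonneg : ∀ o, 0 ≤ m o := by
    intro o; obtain ⟨j, hj⟩ := hm_ex o; rw [hj]; exact (hp j).1 o
  set M : ℝ := ∑ o, m o with hMdef
  set r : Fin n → O → ℝ := fun j o => p j o - m o with hrdef
  have hr_nonneg : ∀ j o, 0 ≤ r j o := fun j o => sub_nonneg.mpr (hm_le j o)
  have hr_sum : ∀ j, ∑ o, r j o = 1 - M := by
    intro j
    rw [hrdef]
    rw [Finset.sum_sub_distrib, (hp j).2, hMdef]
  have hM_le_one : M ≤ 1 := by
    have h := Finset.sum_le_sum (fun o (_ : o ∈ Finset.univ) => hm_le ⟨0, hn⟩ o)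
    rw [(hp ⟨0, hn⟩).2] at h
    exact h
  -- upper bound
  have hub : ∀ q, IsCoupling p q → diagProb q ≤ M := by
    intro q hq
    rw [diagProb, sum_diag_eq hn _ (fun a ha => if_neg ha)]
    apply Finset.sum_le_sum
    intro o _
    rw [if_pos (fun _ _ => rfl)]
    obtain ⟨j, hj⟩ := hm_ex o
    rw [hj]
    calc q (fun _ => o) ≤ ∑ a : Fin n → O, (if a j = o then q a else 0) := by
          have h := Finset.single_le_sum (f := fun a : Fin n → O => if a j = o then q a else 0)
            (fun a _ => by by_cases h : a j = o <;> simp [h, hq.1.1 a]) (Finset.mem_univ (fun _ => o))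
          simpa using h
      _ = p j o := hq.2 j o
  -- the maximal coupling
  set D : ℝ := (1 - M) ^ (n - 1) with hDdef
  have hD_nonneg : 0 ≤ D := pow_nonneg (by linarith) _
  set q₀ : (Fin n → O) → ℝ := fun a =>
    (if ∀ i j, a i = a j then m (a ⟨0, hn⟩) else 0) + (∏ j, r j (a j)) / D with hq₀def
  have hrzero : (1 - M = 0) → ∀ j o, r j o = 0 := by
    intro hc j o
    have := (Finset.sum_eq_zero_iff_of_nonneg (fun o _ => hr_nonneg j o)).mp
      (by rw [hr_sum j, hc]) o (Finset.mem_univ o)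
    exact this
  have herase : ∀ j : Fin n, ∏ k ∈ Finset.univ.erase j, (∑ o', r k o') = D := by
    intro j
    rw [Finset.prod_congr rfl (fun k _ => hr_sum k), Finset.prod_const,
      Finset.card_erase_of_mem (Finset.mem_univ j), Finset.card_univ, Fintype.card_fin, hDdef]
  have hq₀_nonneg : ∀ a, 0 ≤ q₀ a := by
    intro a
    apply add_nonneg
    · split
      · exact hm_nonneg _
      · exact le_refl 0
    · exact div_nonneg (Finset.prod_nonneg fun j _ => hr_nonneg j (a j)) hD_nonneg
  have hq₀_sum : ∑ a, q₀ a = 1 := by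
    rw [hq₀def, Finset.sum_add_distrib]
    have h1 : ∑ a : Fin n → O, (if ∀ i j, a i = a j then m (a ⟨0, hn⟩) else 0) = M := by
      rw [sum_diag_eq hn _ (fun a ha => if_neg ha)]
      simp [hMdef]
    have h2 : ∑ a : Fin n → O, (∏ j, r j (a j)) / D = 1 - M := by
      rw [← Finset.sum_div, sum_prod_eq, Finset.prod_congr rfl (fun j _ => hr_sum j),
        Finset.prod_const, Finset.card_univ, Fintype.card_fin]
      by_cases hc : 1 - M = 0
      · rw [hc, zero_pow (by omega), zero_div]
      · have hD : D ≠ 0 := by rw [hDdef]; exact pow_ne_zero _ hc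
        rw [show n = n - 1 + 1 by omega, pow_succ, ← hDdef, mul_comm, mul_div_assoc,
          div_self hD, mul_one]
    rw [h1, h2]; ring
  have hq₀_marg : ∀ (j : Fin n) (o : O),
      (∑ a : Fin n → O, if a j = o then q₀ a else 0) = p j o := by
    intro j o
    have hsplit : ∀ a : Fin n → O, (if a j = o then q₀ a else 0)
        = (if a j = o then (if ∀ i k, a i = a k then m (a ⟨0, hn⟩) else 0) else 0)
          + (if a j = o then (∏ k, r k (a k)) / D else 0) := by
      intro a; rw [hq₀def]; split <;> simp
    rw [Finset.sum_congr rfl fun a _ => hsplit a, Finset.sum_add_distrib]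
    have h1 : ∑ a : Fin n → O,
        (if a j = o then (if ∀ i k, a i = a k then m (a ⟨0, hn⟩) else 0) else 0) = m o := by
      rw [sum_diag_eq hn _ (fun a ha => by by_cases h : a j = o <;> simp [h, ha])]
      simp
    have h2 : ∑ a : Fin n → O, (if a j = o then (∏ k, r k (a k)) / D else 0) = r j o := by
      have hdd : ∀ a : Fin n → O, (if a j = o then (∏ k, r k (a k)) / D else 0)
          = (if a j = o then (∏ k, r k (a k)) else 0) / D := by
        intro a; split <;> simp
      rw [Finset.sum_congr rfl fun a _ => hdd a, ← Finset.sum_div, sum_prod_cond, herase j]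
      by_cases hc : 1 - M = 0
      · rw [hrzero hc j o, zero_mul, zero_div]
      · have hD : D ≠ 0 := by rw [hDdef]; exact pow_ne_zero _ hc
        rw [mul_div_assoc, div_self hD, mul_one]
    rw [h1, h2]
    simp only [hrdef]
    ring
  have hcoup : IsCoupling p q₀ := ⟨⟨hq₀_nonneg, hq₀_sum⟩, hq₀_marg⟩
  have hdiag : diagProb q₀ = M := by
    rw [diagProb, sum_diag_eq hn _ (fun a ha => if_neg ha)]
    have key : ∀ o : O,
        (if ∀ i j : Fin n, (fun _ => o) i = (fun _ => o) j then q₀ (fun _ => o) else 0)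
          = m o := by
      intro o
      obtain ⟨j, hj⟩ := hm_ex o
      have hz : r j o = 0 := by simp only [hrdef]; linarith
      rw [if_pos (fun _ _ => rfl), hq₀def]
      show (if ∀ i j : Fin n, o = o then m o else 0) + (∏ k, r k o) / D = m o
      rw [Finset.prod_eq_zero (Finset.mem_univ j) hz, zero_div, add_zero,
        if_pos (fun _ _ => rfl)]
    rw [Finset.sum_congr rfl fun o _ => key o]
  constructor
  · exact ⟨q₀, hcoup, fun q' hq' => hdiag ▸ hub q' hq'⟩
  · intro q hq hmax
    have h1 : diagProb q ≤ M := hub q hq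
    have h2 : M ≤ diagProb q := hdiag ▸ hmax q₀ hcoup
    have heq : diagProb q = M := le_antisymm h1 h2
    rw [heq, hMdef]
end

section
/- Let O be a type with exactly two elements and p, p' two probability distributions on O. Then the maximal coupling of p and p' is unique: there is exactly one coupling q of p and p' maximizing q({(a,b) : a = b}). -/
/-- `q` is a coupling of `p` and `p'`: a probability distribution on `O × O`
whose first marginal is `p` and whose second marginal is `p'`. -/
def IsCoupling2 {O : Type*} [Fintype O] (p p' : O → ℝ) (q : O × O → ℝ) : Prop :=
  IsProbDist q ∧ (∀ a, (∑ b, q (a, b)) = p a) ∧ (∀ b, (∑ a, q (a, b)) = p' b)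

/-- The probability of the diagonal `{(a,b) : a = b}` under a distribution on `O × O`. -/
noncomputable def diag2 {O : Type*} [Fintype O] (q : O × O → ℝ) : ℝ := ∑ o, q (o, o)

lemma sum_two_aux {O : Type*} [Fintype O] [DecidableEq O] {a b : O} (hab : a ≠ b)
    (hx : ∀ x : O, x = a ∨ x = b) (f : O → ℝ) : ∑ x, f x = f a + f b := by
  have huniv : (Finset.univ : Finset O) = {a, b} := by
    ext x
    simp only [Finset.mem_univ, Finset.mem_insert, Finset.mem_singleton, true_iff]
    exact hx x
  rw [huniv, Finset.sum_pair hab]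

/-- if `O` has exactly two elements, the maximal coupling of two
probability distributions `p, p'` on `O` is unique. -/
theorem maximal_coupling_unique_two_outcomes {O : Type*} [Fintype O]
    (hcard : Fintype.card O = 2)
    (p p' : O → ℝ) (hp : IsProbDist p) (hp' : IsProbDist p') :
    ∃! q : O × O → ℝ, IsCoupling2 p p' q ∧
      ∀ q', IsCoupling2 p p' q' → diag2 q' ≤ diag2 q := by
  classical
  obtain ⟨a, b, hab, huniv⟩ := (Nat.card_eq_two_iff (α := O)).mp (by rw [Nat.card_eq_fintype_card, hcard])
  have hx : ∀ x : O, x = a ∨ x = b := by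
    intro x
    have : x ∈ ({a, b} : Set O) := by rw [huniv]; trivial
    simpa using this
  have hba : b ≠ a := hab.symm
  -- basic facts about p, p'
  have hpsum : p a + p b = 1 := by rw [← sum_two_aux hab hx p]; exact hp.2
  have hp'sum : p' a + p' b = 1 := by rw [← sum_two_aux hab hx p']; exact hp'.2
  -- facts about any coupling
  have key : ∀ q : O × O → ℝ, IsCoupling2 p p' q →
      q (a, a) + q (a, b) = p a ∧ q (b, a) + q (b, b) = p b ∧
      q (a, a) + q (b, a) = p' a ∧ q (a, b) + q (b, b) = p' b ∧
      diag2 q = q (a, a) + q (b, b) := by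
    intro q hq
    refine ⟨?_, ?_, ?_, ?_, ?_⟩
    · rw [← sum_two_aux hab hx (fun y => q (a, y))]; exact hq.2.1 a
    · rw [← sum_two_aux hab hx (fun y => q (b, y))]; exact hq.2.1 b
    · rw [← sum_two_aux hab hx (fun y => q (y, a))]; exact hq.2.2 a
    · rw [← sum_two_aux hab hx (fun y => q (y, b))]; exact hq.2.2 b
    · exact sum_two_aux hab hx (fun y => q (y, y))
  -- the candidate maximal coupling
  set m := min (p a) (p' a) with hm
  have hm1 : m ≤ p a := min_le_left _ _
  have hm2 : m ≤ p' a := min_le_right _ _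
  have hm0 : 0 ≤ m := le_min (hp.1 a) (hp'.1 a)
  have hm3 : 0 ≤ p b - p' a + m := by
    rcases min_cases (p a) (p' a) with ⟨h, _⟩ | ⟨h, _⟩ <;> rw [hm, h] <;>
      [linarith [hp'.1 b]; linarith [hp.1 b]]
  set q₀ : O × O → ℝ := fun z =>
    if z.1 = a then (if z.2 = a then m else p a - m)
    else (if z.2 = a then p' a - m else p b - p' a + m) with hq₀def
  have e1 : q₀ (a, a) = m := by simp [hq₀def]
  have e2 : q₀ (a, b) = p a - m := by simp [hq₀def, hba]
  have e3 : q₀ (b, a) = p' a - m := by simp [hq₀def, hba]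
  have e4 : q₀ (b, b) = p b - p' a + m := by simp [hq₀def, hba]
  have hq₀nonneg : ∀ z : O × O, 0 ≤ q₀ z := by
    rintro ⟨x, y⟩
    rcases hx x with rfl | rfl <;> rcases hx y with rfl | rfl <;>
      simp only [e1, e2, e3, e4] <;> linarith
  have hq₀coup : IsCoupling2 p p' q₀ := by
    refine ⟨⟨hq₀nonneg, ?_⟩, ?_, ?_⟩
    · rw [Fintype.sum_prod_type, sum_two_aux hab hx,
        sum_two_aux hab hx (fun y => q₀ (a, y)), sum_two_aux hab hx (fun y => q₀ (b, y)),
        e1, e2, e3, e4]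
      linarith
    · intro x
      rcases hx x with rfl | rfl
      · rw [sum_two_aux hab hx (fun y => q₀ (x, y)), e1, e2]; ring
      · rw [sum_two_aux hab hx (fun y => q₀ (x, y)), e3, e4]; linarith
    · intro y
      rcases hx y with rfl | rfl
      · rw [sum_two_aux hab hx (fun x => q₀ (x, y)), e1, e3]; ring
      · rw [sum_two_aux hab hx (fun x => q₀ (x, y)), e2, e4]; linarith
  have hq₀diag : diag2 q₀ = m + (p b - p' a + m) := by
    rw [(key q₀ hq₀coup).2.2.2.2, e1, e4]
  have hmax : ∀ q', IsCoupling2 p p' q' → diag2 q' ≤ diag2 q₀ := by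
    intro q' hq'
    obtain ⟨k1, k2, k3, k4, k5⟩ := key q' hq'
    have h1 : q' (a, a) ≤ p a := by linarith [hq'.1.1 (a, b)]
    have h2 : q' (a, a) ≤ p' a := by linarith [hq'.1.1 (b, a)]
    have h3 : q' (a, a) ≤ m := le_min h1 h2
    rw [hq₀diag, k5]
    linarith
  refine ⟨q₀, ⟨hq₀coup, hmax⟩, ?_⟩
  rintro q ⟨hqc, hqmax⟩
  have hdeq : diag2 q = diag2 q₀ := le_antisymm (hmax q hqc) (hqmax q₀ hq₀coup)
  obtain ⟨k1, k2, k3, k4, k5⟩ := key q hqc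
  have haa : q (a, a) = m := by rw [hq₀diag] at hdeq; rw [k5] at hdeq; linarith
  funext z
  obtain ⟨x, y⟩ := z
  rcases hx x with rfl | rfl <;> rcases hx y with rfl | rfl <;>
    simp only [e1, e2, e3, e4] <;> linarith
end

section
/- Let p and p' be probability distributions on the two-element set {−1, 1} with means ⟨X⟩ = ∑_a a·p(a) and ⟨Y⟩ = ∑_b b·p'(b). Then for any maximal coupling q of p and p', the correlation ⟨XY⟩ = ∑_{a,b} a·b·q(a,b) equals 1 − |⟨X⟩ − ⟨Y⟩|, and this is the maximum value of ∑_{a,b} a·b·q(a,b) over all couplings q of p and p'. -/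
/-- `p` is a probability distribution on the two-element set `{-1, 1} ⊆ ℝ`. -/
def IsProbDistPM (p : ℝ → ℝ) : Prop :=
  (∀ a ∈ ({-1, 1} : Finset ℝ), 0 ≤ p a) ∧ ∑ a ∈ ({-1, 1} : Finset ℝ), p a = 1

/-- `q` is a coupling of the distributions `p` and `p'` on `{-1, 1}`:
a probability distribution on `{-1,1} × {-1,1}` with first marginal `p` and
second marginal `p'`. -/
def IsCouplingPM (p p' : ℝ → ℝ) (q : ℝ → ℝ → ℝ) : Prop :=
  (∀ a ∈ ({-1, 1} : Finset ℝ), ∀ b ∈ ({-1, 1} : Finset ℝ), 0 ≤ q a b) ∧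
  (∑ a ∈ ({-1, 1} : Finset ℝ), ∑ b ∈ ({-1, 1} : Finset ℝ), q a b) = 1 ∧
  (∀ a ∈ ({-1, 1} : Finset ℝ), (∑ b ∈ ({-1, 1} : Finset ℝ), q a b) = p a) ∧
  (∀ b ∈ ({-1, 1} : Finset ℝ), (∑ a ∈ ({-1, 1} : Finset ℝ), q a b) = p' b)

/-- The probability of the diagonal `{(a,b) : a = b}`. -/
noncomputable def diagPM (q : ℝ → ℝ → ℝ) : ℝ := ∑ a ∈ ({-1, 1} : Finset ℝ), q a a

/-- The correlation `⟨XY⟩ = ∑ a·b·q(a,b)` of a distribution on `{-1,1}²`. -/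
noncomputable def corrPM (q : ℝ → ℝ → ℝ) : ℝ :=
  ∑ a ∈ ({-1, 1} : Finset ℝ), ∑ b ∈ ({-1, 1} : Finset ℝ), a * b * q a b

/-- The mean `⟨X⟩ = ∑ a·p(a)` of a distribution on `{-1,1}`. -/
noncomputable def meanPM (p : ℝ → ℝ) : ℝ := ∑ a ∈ ({-1, 1} : Finset ℝ), a * p a

lemma sum_pm (f : ℝ → ℝ) : ∑ a ∈ ({-1, 1} : Finset ℝ), f a = f (-1) + f 1 :=
  Finset.sum_pair (by norm_num)

lemma coupling_corr_diag (p p' : ℝ → ℝ)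
    (hp : IsProbDistPM p) (hp' : IsProbDistPM p')
    (q : ℝ → ℝ → ℝ) (hq : IsCouplingPM p p' q) :
    corrPM q = 2 * diagPM q - 1 ∧ diagPM q ≤ 1 - |p 1 - p' 1| := by
  obtain ⟨hn, ht, hr, hc⟩ := hq
  have hp1 : p (-1) + p 1 = 1 := by have := hp.2; rwa [sum_pm] at this
  have hp'1 : p' (-1) + p' 1 = 1 := by have := hp'.2; rwa [sum_pm] at this
  have hmem1 : (-1 : ℝ) ∈ ({-1, 1} : Finset ℝ) := by simp
  have hmem2 : (1 : ℝ) ∈ ({-1, 1} : Finset ℝ) := by simp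
  have hrow1 : q (-1) (-1) + q (-1) 1 = p (-1) := by
    have := hr (-1) hmem1; rwa [sum_pm] at this
  have hrow2 : q 1 (-1) + q 1 1 = p 1 := by
    have := hr 1 hmem2; rwa [sum_pm] at this
  have hcol1 : q (-1) (-1) + q 1 (-1) = p' (-1) := by
    have := hc (-1) hmem1; rwa [sum_pm] at this
  have hcol2 : q (-1) 1 + q 1 1 = p' 1 := by
    have := hc 1 hmem2; rwa [sum_pm] at this
  have n11 := hn (-1) hmem1 (-1) hmem1
  have n12 := hn (-1) hmem1 1 hmem2
  have n21 := hn 1 hmem2 (-1) hmem1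
  have n22 := hn 1 hmem2 1 hmem2
  have htot : q (-1) (-1) + q (-1) 1 + (q 1 (-1) + q 1 1) = 1 := by
    have := ht; rw [sum_pm] at this; rw [sum_pm, sum_pm] at this; linarith
  constructor
  · unfold corrPM diagPM
    simp only [sum_pm]
    ring_nf
    linarith
  · unfold diagPM
    rw [sum_pm]
    rcases abs_cases (p 1 - p' 1) with ⟨h, _⟩ | ⟨h, _⟩ <;> rw [h] <;> linarith

lemma exists_good_coupling (p p' : ℝ → ℝ)
    (hp : IsProbDistPM p) (hp' : IsProbDistPM p') :
    ∃ q0, IsCouplingPM p p' q0 ∧ diagPM q0 = 1 - |p 1 - p' 1| := by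
  have hp1 : p (-1) + p 1 = 1 := by have := hp.2; rwa [sum_pm] at this
  have hp'1 : p' (-1) + p' 1 = 1 := by have := hp'.2; rwa [sum_pm] at this
  have hmem1 : (-1 : ℝ) ∈ ({-1, 1} : Finset ℝ) := by simp
  have hmem2 : (1 : ℝ) ∈ ({-1, 1} : Finset ℝ) := by simp
  have hpn1 := hp.1 (-1) hmem1
  have hpn2 := hp.1 1 hmem2
  have hp'n1 := hp'.1 (-1) hmem1
  have hp'n2 := hp'.1 1 hmem2
  refine ⟨fun a b => if a = b then min (p a) (p' a) else max (p a - p' a) 0, ?_, ?_⟩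
  · refine ⟨?_, ?_, ?_, ?_⟩
    · intro a ha b hb
      by_cases h : a = b
      · simp only [if_pos h]
        have h1 : 0 ≤ p a := hp.1 a ha
        have h2 : 0 ≤ p' a := hp'.1 a ha
        exact le_min h1 h2
      · simp only [if_neg h]
        exact le_max_right _ _
    · rw [sum_pm]
      rw [sum_pm, sum_pm]
      norm_num
      rcases le_total (p (-1)) (p' (-1)) with h | h <;>
      rcases le_total (p 1) (p' 1) with h2 | h2 <;>
      · rw [min_def, min_def, max_def, max_def]
        split_ifs <;> linarith
    · intro a ha
      rw [sum_pm]
      rcases Finset.mem_insert.mp ha with rfl | ha'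
      · norm_num
        rw [min_def, max_def]; split_ifs <;> linarith
      · simp only [Finset.mem_singleton] at ha'; subst ha'
        norm_num
        rw [min_def, max_def]; split_ifs <;> linarith
    · intro b hb
      rw [sum_pm]
      rcases Finset.mem_insert.mp hb with rfl | hb'
      · norm_num
        rw [min_def, max_def]; split_ifs <;> linarith
      · simp only [Finset.mem_singleton] at hb'; subst hb'
        norm_num
        rw [min_def, max_def]; split_ifs <;> linarith
  · unfold diagPM
    rw [sum_pm]
    norm_num
    rcases abs_cases (p 1 - p' 1) with ⟨h, _⟩ | ⟨h, _⟩ <;> rw [h] <;>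
      rw [min_def, min_def] <;> split_ifs <;> linarith

/-- any maximal coupling `q` of two `±1`-valued distributions has
correlation `⟨XY⟩ = 1 − |⟨X⟩ − ⟨Y⟩|`, and this is the maximum of the correlation
over all couplings. -/
theorem maximal_coupling_correlation (p p' : ℝ → ℝ)
    (hp : IsProbDistPM p) (hp' : IsProbDistPM p')
    (q : ℝ → ℝ → ℝ) (hq : IsCouplingPM p p' q)
    (hmax : ∀ q', IsCouplingPM p p' q' → diagPM q' ≤ diagPM q) :
    corrPM q = 1 - |meanPM p - meanPM p'| ∧
    ∀ q', IsCouplingPM p p' q' → corrPM q' ≤ 1 - |meanPM p - meanPM p'| := by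
  obtain ⟨hcd, hle⟩ := coupling_corr_diag p p' hp hp' q hq
  obtain ⟨q0, hq0, hd0⟩ := exists_good_coupling p p' hp hp'
  have hge : 1 - |p 1 - p' 1| ≤ diagPM q := hd0 ▸ hmax q0 hq0
  have hdq : diagPM q = 1 - |p 1 - p' 1| := le_antisymm hle hge
  have hp1 : p (-1) + p 1 = 1 := by have := hp.2; rwa [sum_pm] at this
  have hp'1 : p' (-1) + p' 1 = 1 := by have := hp'.2; rwa [sum_pm] at this
  have hmean : |meanPM p - meanPM p'| = 2 * |p 1 - p' 1| := by
    unfold meanPM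
    rw [sum_pm, sum_pm]
    rw [show (-1) * p (-1) + 1 * p 1 - ((-1) * p' (-1) + 1 * p' 1) = 2 * (p 1 - p' 1) by linarith,
      abs_mul, abs_two]
  constructor
  · rw [hmean]; rw [hcd, hdq]; ring
  · intro q' hq'
    obtain ⟨hcd', hle'⟩ := coupling_corr_diag p p' hp hp' q' hq'
    rw [hmean]
    linarith
end

section
/- Let Γ = (X, 𝒞, O) be a compatibility scenario and B a behavior for Γ. Then B is noncontextual if and only if B is a convex combination of deterministic behaviors: there exist nonnegative weights λ_g, indexed by global assignments g : X → O, with ∑_g λ_g = 1, such that for every context C ∈ 𝒞 and every outcome list a : C → O, B(C)(a) = ∑_{g : X → O, g|_C = a} λ_g. Consequently the set of noncontextual behaviors is the convex hull of the finitely many deterministic behaviors, and in particular is a compact convex subset of the real vector space of all behaviors. -/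
/-- The real vector space of behaviors for the scenario with measurements `X`,
contexts `𝒞` and outcomes `O`: vectors in `∏_{C ∈ 𝒞} ((C → O) → ℝ)`. -/
abbrev BSpace {X : Type*} (𝒞 : Finset (Finset X)) (O : Type*) : Type _ :=
  (C : {C : Finset X // C ∈ 𝒞}) → ({x // x ∈ C.1} → O) → ℝ

/-- A behavior is noncontextual if some probability distribution on global
assignments `X → O` has it as its family of context marginals. -/
def NCbehavior {X O : Type*} [Fintype X] [DecidableEq X] [Fintype O] [DecidableEq O]
    (𝒞 : Finset (Finset X)) (B : BSpace 𝒞 O) : Prop :=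
  ∃ p : (X → O) → ℝ, IsProbDist p ∧
    ∀ (C : {C : Finset X // C ∈ 𝒞}) (f : {x // x ∈ C.1} → O),
      B C f = ∑ g : X → O, if ∀ x : {x // x ∈ C.1}, g x.1 = f x then p g else 0

/-- The deterministic behavior associated with a global assignment `g : X → O`:
each context gets the point distribution concentrated on the restriction of `g`. -/
noncomputable def detB {X O : Type*} [DecidableEq O] (𝒞 : Finset (Finset X)) (g : X → O) :
    BSpace 𝒞 O :=
  fun C f => if ∀ x : {x // x ∈ C.1}, g x.1 = f x then 1 else 0

/-! The noncontextual behaviors are exactly the images of probability vectors on global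
assignments under the linear map `λ ↦ ∑ g, λ g • detB g`, since the marginal of `λ` on a
context is that linear combination evaluated there. Being the linear image of the standard
simplex, this set is the convex hull of the images of its vertices, the deterministic
behaviors, and it is compact. -/

theorem convexHull_range_eq_image_stdSimplex {R E ι : Type*} [Field R] [LinearOrder R]
    [IsStrictOrderedRing R] [AddCommGroup E] [Module R E] [Fintype ι] [DecidableEq ι]
    (v : ι → E) :
    convexHull R (Set.range v) = Fintype.linearCombination R v '' stdSimplex R ι := by
  rw [← convexHull_basis_eq_stdSimplex, LinearMap.image_convexHull, ← Set.range_comp]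
  congr
  funext i
  simp [Fintype.linearCombination_apply, ite_smul]

section Behaviors

variable {X O : Type*} [Fintype X] [DecidableEq X] [Fintype O] [DecidableEq O]
  (𝒞 : Finset (Finset X))

theorem sum_smul_detB_apply (lam : (X → O) → ℝ) (C : {C : Finset X // C ∈ 𝒞})
    (f : {x // x ∈ C.1} → O) :
    (∑ g : X → O, lam g • detB 𝒞 g) C f
      = ∑ g : X → O, if ∀ x : {x // x ∈ C.1}, g x.1 = f x then lam g else 0 := by
  simp only [Finset.sum_apply, Pi.smul_apply, detB, smul_eq_mul, mul_ite, mul_one, mul_zero]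

theorem ncBehavior_iff_exists_sum_smul_detB (B : BSpace 𝒞 O) :
    NCbehavior 𝒞 B ↔ ∃ lam : (X → O) → ℝ,
      (∀ g, 0 ≤ lam g) ∧ (∑ g, lam g) = 1 ∧ B = ∑ g : X → O, lam g • detB 𝒞 g := by
  simp only [NCbehavior, IsProbDist, funext_iff, sum_smul_detB_apply, and_assoc]

theorem setOf_ncBehavior_eq_image_stdSimplex :
    {B : BSpace 𝒞 O | NCbehavior 𝒞 B} =
      Fintype.linearCombination ℝ (detB 𝒞) '' stdSimplex ℝ (X → O) := by
  ext B
  simp only [Set.mem_ofPred_eq, ncBehavior_iff_exists_sum_smul_detB, Set.mem_image,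
    stdSimplex, Fintype.linearCombination_apply, and_assoc, eq_comm (a := B)]

end Behaviors

/-- a behavior is noncontextual iff it is a convex combination of
deterministic behaviors; consequently the noncontextual set is the convex hull of
the deterministic behaviors and is convex and compact. -/
theorem noncontextual_iff_convex_combination_of_deterministic
    {X O : Type*} [Fintype X] [DecidableEq X] [Fintype O] [DecidableEq O]
    (𝒞 : Finset (Finset X)) (B : BSpace 𝒞 O) :
    (NCbehavior 𝒞 B ↔ ∃ lam : (X → O) → ℝ,
      (∀ g, 0 ≤ lam g) ∧ (∑ g, lam g) = 1 ∧ B = ∑ g : X → O, lam g • detB 𝒞 g) ∧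
    {B' : BSpace 𝒞 O | NCbehavior 𝒞 B'} =
      convexHull ℝ (Set.range (detB 𝒞 : (X → O) → BSpace 𝒞 O)) ∧
    Convex ℝ {B' : BSpace 𝒞 O | NCbehavior 𝒞 B'} ∧
    IsCompact {B' : BSpace 𝒞 O | NCbehavior 𝒞 B'} := by
  have hull : {B' : BSpace 𝒞 O | NCbehavior 𝒞 B'} =
      convexHull ℝ (Set.range (detB 𝒞 : (X → O) → BSpace 𝒞 O)) := by
    rw [setOf_ncBehavior_eq_image_stdSimplex, convexHull_range_eq_image_stdSimplex]
  refine ⟨ncBehavior_iff_exists_sum_smul_detB 𝒞 B, hull, ?_, ?_⟩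
  · exact hull ▸ convex_convexHull ℝ _
  · exact hull ▸ (Set.finite_range _).isCompact_convexHull (𝕜 := ℝ)
end

section
/- Let n ≥ 3 and let B be a behavior for the n-cycle scenario. Then the extended behavior for B is unique: for each measurement i ∈ ZMod n there is exactly one maximal coupling of the two single-measurement marginal distributions of i obtained from the contexts C_{i−1} and C_i, and this maximal coupling satisfies ⟨i^{i−1} iⁱ⟩ = 1 − |⟨i^{i−1}⟩ − ⟨iⁱ⟩|, where ⟨i^{i−1} iⁱ⟩ is the correlation of the coupling and ⟨i^{i−1}⟩, ⟨iⁱ⟩ are the means of the two marginals. -/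
/-- The two-element outcome set `{-1, 1} ⊆ ℤ`. -/
abbrev PM : Type := {x : ℤ // x ∈ ({-1, 1} : Finset ℤ)}

/-- The correlation `∑ a·b·d(a,b)` of a distribution `d` on `{-1,1}²`. -/
noncomputable def corrD (d : PM × PM → ℝ) : ℝ :=
  ∑ a : PM, ∑ b : PM, ((a : ℤ) : ℝ) * ((b : ℤ) : ℝ) * d (a, b)

/-- The mean `∑ a·m(a)` of a distribution `m` on `{-1,1}`. -/
noncomputable def meanD (m : PM → ℝ) : ℝ := ∑ a : PM, ((a : ℤ) : ℝ) * m a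

/-- The single-measurement marginal of measurement `i` obtained from its
context `C_i = {i, i+1}` (`i` is the first coordinate of `p i`): `⟨iⁱ⟩`-marginal. -/
noncomputable def margFromOwn {n : ℕ} (p : ZMod n → PM × PM → ℝ) (i : ZMod n) : PM → ℝ :=
  fun a => ∑ b : PM, p i (a, b)

/-- The single-measurement marginal of measurement `i` obtained from the context
`C_{i-1} = {i-1, i}` (`i` is the second coordinate of `p (i-1)`): `⟨i^{i-1}⟩`-marginal. -/
noncomputable def margFromPrev {n : ℕ} (p : ZMod n → PM × PM → ℝ) (i : ZMod n) : PM → ℝ :=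
  fun a => ∑ b : PM, p (i - 1) (b, a)

/-- The extended measurement set of the `n`-cycle scenario: `(i, false)` is the copy
`iⁱ` of `i` in the context `C_i`, and `(i, true)` is the copy `i^{i-1}` of `i` in the
context `C_{i-1}`. -/
abbrev ECyc (n : ℕ) : Type := ZMod n × Bool

/-- The marginal of a distribution `q` on extended global assignments on the extended
context corresponding to `C_i` (first coordinate: the copy `iⁱ`; second: `(i+1)ⁱ`). -/
noncomputable def ctxM {n : ℕ} [NeZero n] (q : (ECyc n → PM) → ℝ) (i : ZMod n) :
    PM × PM → ℝ :=
  fun ab => ∑ g : ECyc n → PM,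
    if g (i, false) = ab.1 ∧ g (i + 1, true) = ab.2 then q g else 0

/-- The marginal of `q` on the two copies of measurement `i`
(first coordinate: `i^{i-1}`; second: `iⁱ`). -/
noncomputable def copM {n : ℕ} [NeZero n] (q : (ECyc n → PM) → ℝ) (i : ZMod n) :
    PM × PM → ℝ :=
  fun ab => ∑ g : ECyc n → PM,
    if g (i, true) = ab.1 ∧ g (i, false) = ab.2 then q g else 0

/-- A behavior `p` for the `n`-cycle scenario has a maximally noncontextual
description: some probability distribution on extended global assignments reproduces
each `p i` and induces a maximal coupling on the two copies of each measurement. -/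
def CycleMaxNCDescription {n : ℕ} [NeZero n] (p : ZMod n → PM × PM → ℝ) : Prop :=
  ∃ q : (ECyc n → PM) → ℝ, IsProbDist q ∧ (∀ i, ctxM q i = p i) ∧
    ∀ i, IsCoupling2 (margFromPrev p i) (margFromOwn p i) (copM q i) ∧
      ∀ r, IsCoupling2 (margFromPrev p i) (margFromOwn p i) r →
        diag2 r ≤ diag2 (copM q i)

namespace CycleAux

noncomputable section

def em : PM := ⟨-1, by decide⟩
def e1 : PM := ⟨1, by decide⟩

lemma hne : em ≠ e1 := by
  intro h
  have := congrArg Subtype.val h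
  simp [em, e1] at this

lemma pm_cases (a : PM) : a = em ∨ a = e1 := by
  rcases a with ⟨x, hx⟩
  simp only [Finset.mem_insert, Finset.mem_singleton] at hx
  rcases hx with h | h
  · left; exact Subtype.ext h
  · right; exact Subtype.ext h

lemma univ_eq : (Finset.univ : Finset PM) = {em, e1} := by
  ext a
  simp only [Finset.mem_univ, Finset.mem_insert, Finset.mem_singleton, true_iff]
  exact pm_cases a

lemma sumPM (f : PM → ℝ) : ∑ a : PM, f a = f em + f e1 := by
  rw [univ_eq, Finset.sum_pair hne]

lemma em_coe : (((em : PM) : ℤ) : ℝ) = -1 := by norm_num [em]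
lemma e1_coe : (((e1 : PM) : ℤ) : ℝ) = 1 := by norm_num [e1]

lemma hdiag (r : PM × PM → ℝ) : diag2 r = r (em, em) + r (e1, e1) :=
  sumPM (fun o => r (o, o))

lemma hcorr (r : PM × PM → ℝ) :
    corrD r = r (em, em) - r (em, e1) - r (e1, em) + r (e1, e1) := by
  unfold corrD
  rw [sumPM (fun a => ∑ b : PM, ((a : ℤ) : ℝ) * ((b : ℤ) : ℝ) * r (a, b)),
    sumPM (fun b => ((em : ℤ) : ℝ) * ((b : ℤ) : ℝ) * r (em, b)),
    sumPM (fun b => ((e1 : ℤ) : ℝ) * ((b : ℤ) : ℝ) * r (e1, b)), em_coe, e1_coe]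
  ring

lemma key (m m' : PM → ℝ) (hm : IsProbDist m) (hm' : IsProbDist m') :
    (∃! r : PM × PM → ℝ,
        IsCoupling2 m m' r ∧
          ∀ r', IsCoupling2 m m' r' → diag2 r' ≤ diag2 r) ∧
      ∀ r : PM × PM → ℝ, IsCoupling2 m m' r →
        (∀ r', IsCoupling2 m m' r' → diag2 r' ≤ diag2 r) →
        corrD r = 1 - |meanD m - meanD m'| := by
  obtain ⟨hm0, hm1⟩ := hm
  obtain ⟨hm'0, hm'1⟩ := hm'
  set α := m e1 with hα
  set β := m' e1 with hβ
  have hmem : m em = 1 - α := by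
    have := hm1; rw [sumPM] at this; linarith
  have hm'em : m' em = 1 - β := by
    have := hm'1; rw [sumPM] at this; linarith
  have hα0 : 0 ≤ α := hm0 e1
  have hβ0 : 0 ≤ β := hm'0 e1
  have hα1 : α ≤ 1 := by have := hm0 em; linarith [hmem]
  have hβ1 : β ≤ 1 := by have := hm'0 em; linarith [hm'em]
  -- the canonical maximal coupling
  set t0 := min α β with ht0
  set q0 : PM × PM → ℝ := fun ab =>
    if ab.1 = e1 then (if ab.2 = e1 then t0 else α - t0)
    else (if ab.2 = e1 then β - t0 else 1 - α - β + t0) with hq0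
  have q0_11 : q0 (e1, e1) = t0 := by simp [hq0]
  have q0_1m : q0 (e1, em) = α - t0 := by simp [hq0, hne]
  have q0_m1 : q0 (em, e1) = β - t0 := by simp [hq0, hne]
  have q0_mm : q0 (em, em) = 1 - α - β + t0 := by simp [hq0, hne]
  have ht0α : t0 ≤ α := min_le_left _ _
  have ht0β : t0 ≤ β := min_le_right _ _
  have ht00 : 0 ≤ t0 := le_min hα0 hβ0
  have ht0lb : α + β - 1 ≤ t0 := by
    rcases le_total α β with h | h
    · rw [ht0, min_eq_left h]; linarith
    · rw [ht0, min_eq_right h]; linarith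
  -- values of an arbitrary coupling, determined by r (e1, e1)
  have hvals : ∀ r : PM × PM → ℝ, IsCoupling2 m m' r →
      r (e1, em) = α - r (e1, e1) ∧ r (em, e1) = β - r (e1, e1) ∧
        r (em, em) = 1 - α - β + r (e1, e1) := by
    rintro r ⟨⟨hr0, hr1⟩, hr2, hr3⟩
    have h1 := hr2 e1
    rw [sumPM (fun b => r (e1, b))] at h1
    have h2 := hr3 e1
    rw [sumPM (fun a => r (a, e1))] at h2
    have h3 := hr2 em
    rw [sumPM (fun b => r (em, b))] at h3
    refine ⟨by linarith, by linarith, by linarith [hmem]⟩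
  have htle : ∀ r : PM × PM → ℝ, IsCoupling2 m m' r → r (e1, e1) ≤ t0 := by
    intro r hr
    obtain ⟨h1, h2, _⟩ := hvals r hr
    have n1 : 0 ≤ r (e1, em) := hr.1.1 _
    have n2 : 0 ≤ r (em, e1) := hr.1.1 _
    exact le_min (by linarith) (by linarith)
  have hq0c : IsCoupling2 m m' q0 := by
    refine ⟨⟨?_, ?_⟩, ?_, ?_⟩
    · rintro ⟨a, b⟩
      rcases pm_cases a with ha | ha <;> rcases pm_cases b with hb | hb <;>
        subst ha <;> subst hb <;>
        simp only [q0_11, q0_1m, q0_m1, q0_mm] <;> linarith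
    · rw [Fintype.sum_prod_type,
        sumPM (fun a => ∑ b : PM, q0 (a, b)),
        sumPM (fun b => q0 (em, b)), sumPM (fun b => q0 (e1, b)),
        q0_11, q0_1m, q0_m1, q0_mm]
      ring
    · intro a
      rcases pm_cases a with ha | ha <;> subst ha
      · rw [sumPM (fun b => q0 (em, b)), q0_m1, q0_mm, hmem]; ring
      · rw [sumPM (fun b => q0 (e1, b)), q0_11, q0_1m]; ring
    · intro b
      rcases pm_cases b with hb | hb <;> subst hb
      · rw [sumPM (fun a => q0 (a, em)), q0_1m, q0_mm, hm'em]; ring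
      · rw [sumPM (fun a => q0 (a, e1)), q0_11, q0_m1]; ring
  have hq0max : ∀ r', IsCoupling2 m m' r' → diag2 r' ≤ diag2 q0 := by
    intro r hr
    obtain ⟨_, _, h3⟩ := hvals r hr
    rw [hdiag, hdiag, h3, q0_11, q0_mm]
    have := htle r hr
    linarith
  -- any maximal coupling equals q0
  have huniq : ∀ r : PM × PM → ℝ, IsCoupling2 m m' r →
      (∀ r', IsCoupling2 m m' r' → diag2 r' ≤ diag2 r) → r = q0 := by
    intro r hr hrmax
    have h1 : diag2 q0 ≤ diag2 r := hrmax q0 hq0c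
    have h2 : diag2 r ≤ diag2 q0 := hq0max r hr
    obtain ⟨v1, v2, v3⟩ := hvals r hr
    have ht : r (e1, e1) = t0 := by
      rw [hdiag, hdiag, v3, q0_11, q0_mm] at h1
      have := htle r hr
      linarith
    funext s
    obtain ⟨a, b⟩ := s
    rcases pm_cases a with ha | ha <;> rcases pm_cases b with hb | hb <;>
      subst ha <;> subst hb <;>
      simp only [q0_11, q0_1m, q0_m1, q0_mm, v1, v2, v3, ht]
  have hmean : meanD m = 2 * α - 1 := by
    unfold meanD
    rw [sumPM (fun a => ((a : ℤ) : ℝ) * m a), em_coe, e1_coe, hmem]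
    ring
  have hmean' : meanD m' = 2 * β - 1 := by
    unfold meanD
    rw [sumPM (fun a => ((a : ℤ) : ℝ) * m' a), em_coe, e1_coe, hm'em]
    ring
  constructor
  · exact ⟨q0, ⟨hq0c, hq0max⟩, fun y ⟨hy, hymax⟩ => huniq y hy hymax⟩
  · intro r hr hrmax
    have hrq0 := huniq r hr hrmax
    subst hrq0
    rw [hcorr, q0_11, q0_1m, q0_m1, q0_mm, hmean, hmean']
    rcases le_total α β with h | h
    · rw [ht0, min_eq_left h, abs_of_nonpos (by linarith)]; ring
    · rw [ht0, min_eq_right h, abs_of_nonneg (by linarith)]; ring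

end

end CycleAux

/-- in the `n`-cycle scenario the extended behavior is unique: for each
measurement `i` there is exactly one maximal coupling of its two single-measurement
marginals (from `C_{i-1}` and `C_i`), and every maximal coupling satisfies
`⟨i^{i-1} iⁱ⟩ = 1 − |⟨i^{i-1}⟩ − ⟨iⁱ⟩|`. -/
theorem cycle_extended_behavior_unique (n : ℕ) (hn : 3 ≤ n) [NeZero n]
    (p : ZMod n → PM × PM → ℝ) (hp : ∀ i, IsProbDist (p i)) :
    ∀ i : ZMod n,
      (∃! r : PM × PM → ℝ,
        IsCoupling2 (margFromPrev p i) (margFromOwn p i) r ∧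
          ∀ r', IsCoupling2 (margFromPrev p i) (margFromOwn p i) r' →
            diag2 r' ≤ diag2 r) ∧
      ∀ r : PM × PM → ℝ,
        IsCoupling2 (margFromPrev p i) (margFromOwn p i) r →
        (∀ r', IsCoupling2 (margFromPrev p i) (margFromOwn p i) r' →
          diag2 r' ≤ diag2 r) →
        corrD r = 1 - |meanD (margFromPrev p i) - meanD (margFromOwn p i)| := by
  intro i
  have hprev : IsProbDist (margFromPrev p i) := by
    constructor
    · intro a
      exact Finset.sum_nonneg fun b _ => (hp (i - 1)).1 _
    · unfold margFromPrev
      rw [Finset.sum_comm, ← Fintype.sum_prod_type]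
      exact (hp (i - 1)).2
  have hown : IsProbDist (margFromOwn p i) := by
    constructor
    · intro a
      exact Finset.sum_nonneg fun b _ => (hp i).1 _
    · unfold margFromOwn
      rw [← Fintype.sum_prod_type]
      exact (hp i).2
  exact CycleAux.key _ _ hprev hown
end

section
/- For n ≥ 3, the extended compatibility graph of the n-cycle scenario is isomorphic to the cycle graph on 2n vertices. Concretely, the simple graph whose vertex set is {(x, C) : C ∈ 𝒞, x ∈ C} for the n-cycle scenario (vertices (i, C_{i−1}), (i, C_i) for i ∈ ZMod n), with an edge between two distinct vertices exactly when they lie in a common extended context—i.e., edges {(i, C_i), (i+1, C_i)} for each i (copies in the same original context) and edges {(i, C_{i−1}), (i, C_i)} for each i (two copies of the same measurement)—is isomorphic as a simple graph to the cycle C_{2n}. -/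
set_option linter.unusedSectionVars false

namespace CycleIsoAux

variable {n : ℕ} [NeZero n]

def psi (n : ℕ) [NeZero n] (a : ZMod n) : ZMod (2 * n) := ((2 * a.val : ℕ) : ZMod (2 * n))

lemma psi_inj : Function.Injective (psi n) := by
  intro a b h
  have h2 : (2 : ℕ) ≠ 0 := by norm_num
  have := (ZMod.natCast_eq_natCast_iff _ _ _).mp h
  have := Nat.ModEq.mul_left_cancel' h2 this
  have hv : a.val = b.val := by
    have ha := a.val_lt
    have hb := b.val_lt
    rwa [Nat.ModEq, Nat.mod_eq_of_lt ha, Nat.mod_eq_of_lt hb] at this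
  exact ZMod.val_injective n hv

lemma psi_add (a b : ZMod n) : psi n (a + b) = psi n a + psi n b := by
  unfold psi
  rw [← Nat.cast_add, ZMod.natCast_eq_natCast_iff, ZMod.val_add, ← Nat.mul_add]
  exact Nat.ModEq.mul_left' 2 (Nat.mod_modEq _ _)

lemma psi_even (a : ZMod n) : (ZMod.castHom (by omega : (2:ℕ) ∣ 2 * n) (ZMod 2)) (psi n a) = 0 := by
  unfold psi
  rw [map_natCast, Nat.cast_mul]
  have h2 : ((2:ℕ):ZMod 2) = 0 := by decide
  rw [h2, zero_mul]

lemma psi_ne_odd (a b : ZMod n) : psi n a ≠ psi n b + 1 := by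
  intro h
  have := congrArg (ZMod.castHom (by omega : (2:ℕ) ∣ 2 * n) (ZMod 2)) h
  rw [map_add, map_one, psi_even, psi_even] at this
  simp at this

lemma psi_one (hn : 3 ≤ n) : psi n 1 = 2 := by
  haveI : Fact (1 < n) := ⟨by omega⟩
  unfold psi
  rw [ZMod.val_one]
  norm_num

lemma psi_succ (hn : 3 ≤ n) (a : ZMod n) : psi n (a + 1) = psi n a + 2 := by
  rw [psi_add, psi_one hn]

abbrev V (n : ℕ) := {v : ZMod n × ZMod n // v.2 = v.1 ∨ v.2 = v.1 - 1}

def F (n : ℕ) [NeZero n] (u : V n) : ZMod (2 * n) :=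
  if u.1.2 = u.1.1 then psi n u.1.1 else psi n u.1.1 - 1

lemma sub_one_ne (hn : 3 ≤ n) (i : ZMod n) : i - 1 ≠ i := by
  haveI : Fact (1 < n) := ⟨by omega⟩
  intro h
  exact one_ne_zero (sub_eq_self.mp h)

lemma F_eq_a (i j : ZMod n) (h) (hij : j = i) : F n ⟨(i, j), h⟩ = psi n i := by
  unfold F
  simp only
  rw [hij, if_pos rfl]

lemma F_eq_b (hn : 3 ≤ n) (i j : ZMod n) (h) (hij : j = i - 1) :
    F n ⟨(i, j), h⟩ = psi n i - 1 := by
  unfold F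
  simp only
  rw [hij, if_neg (sub_one_ne hn i)]

lemma F_inj (hn : 3 ≤ n) : Function.Injective (F n) := by
  rintro ⟨⟨i, j⟩, hu⟩ ⟨⟨i', j'⟩, hv⟩ h
  rcases hu with hu | hu <;> rcases hv with hv | hv
  · rw [F_eq_a _ _ _ hu, F_eq_a _ _ _ hv] at h
    obtain rfl := psi_inj h
    exact Subtype.ext (by rw [Prod.mk.injEq]; exact ⟨rfl, hu.trans hv.symm⟩)
  · rw [F_eq_a _ _ _ hu, F_eq_b hn _ _ _ hv] at h
    exact absurd (by linear_combination -h) (psi_ne_odd (n := n) i' i)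
  · rw [F_eq_b hn _ _ _ hu, F_eq_a _ _ _ hv] at h
    exact absurd (by linear_combination h) (psi_ne_odd (n := n) i i')
  · rw [F_eq_b hn _ _ _ hu, F_eq_b hn _ _ _ hv] at h
    obtain rfl := psi_inj (show psi n i = psi n i' by linear_combination h)
    exact Subtype.ext (by rw [Prod.mk.injEq]; exact ⟨rfl, hu.trans hv.symm⟩)

def E (hn : 3 ≤ n) : ZMod n × Bool ≃ V n where
  toFun p := if p.2 then ⟨(p.1, p.1), Or.inl rfl⟩ else ⟨(p.1, p.1 - 1), Or.inr rfl⟩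
  invFun u := (u.1.1, decide (u.1.2 = u.1.1))
  left_inv := by
    rintro ⟨i, b⟩
    cases b
    · simp [sub_one_ne hn i]
    · simp
  right_inv := by
    rintro ⟨⟨i, j⟩, hu⟩
    by_cases h : j = i
    · simp [h]
    · have hj : j = i - 1 := hu.resolve_left h
      haveI : Fact (1 < n) := ⟨by omega⟩
      simp only [decide_eq_true_eq]
      rw [if_neg (by rw [hj]; exact fun hh => h (hh ▸ hj))]
      exact Subtype.ext (by rw [Prod.mk.injEq]; exact ⟨rfl, hj.symm⟩)

lemma F_bij (hn : 3 ≤ n) : Function.Bijective (F n) := by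
  haveI : NeZero (2 * n) := ⟨by omega⟩
  rw [Fintype.bijective_iff_injective_and_card]
  refine ⟨F_inj hn, ?_⟩
  rw [← Fintype.card_congr (E hn), Fintype.card_prod, ZMod.card, ZMod.card, Fintype.card_bool]
  ring


lemma psi_ne_odd' (a b : ZMod n) : psi n a ≠ psi n b - 1 := fun h =>
  psi_ne_odd b a (by linear_combination -h)

end CycleIsoAux

open CycleIsoAux

/-- the extended compatibility graph of the `n`-cycle scenario is
isomorphic to the cycle graph on `2n` vertices.

A vertex `⟨(i, j), _⟩` represents the copy of the measurement `i ∈ ZMod n` in the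
context `C_j = {j, j+1}`; the measurement `i` belongs to `C_j` exactly when `j = i`
or `j = i - 1`.  Two distinct vertices are adjacent exactly when they lie in a common
extended context, i.e. when they are copies in the same original context (`j = j\'`) or
two copies of the same measurement (`i = i\'`).  The cycle graph on `ZMod (2n)` joins
`j` and `k` iff `j - k = ±1`. -/
theorem extended_graph_of_cycle_iso_cycle (n : ℕ) (hn : 3 ≤ n) [NeZero n] :
    Nonempty
      ((SimpleGraph.fromRel
          (fun u v : {v : ZMod n × ZMod n // v.2 = v.1 ∨ v.2 = v.1 - 1} =>
            u.1.1 = v.1.1 ∨ u.1.2 = v.1.2)) ≃g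
        (SimpleGraph.fromRel (fun j k : ZMod (2 * n) => j - k = 1))) := by
  haveI : Fact (1 < n) := ⟨by omega⟩
  refine ⟨⟨Equiv.ofBijective (F n) (F_bij hn), fun {u v} => ?_⟩⟩
  obtain ⟨⟨i, j⟩, hu⟩ := u
  obtain ⟨⟨i', j'⟩, hv⟩ := v
  rw [SimpleGraph.fromRel_adj, SimpleGraph.fromRel_adj]
  simp only [Equiv.ofBijective_apply]
  rcases hu with hu | hu <;> rcases hv with hv | hv
  · -- j = i, j' = i'
    replace hu : j = i := hu
    replace hv : j' = i' := hv
    rw [F_eq_a i j _ hu, F_eq_a i' j' _ hv]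
    constructor
    · rintro ⟨-, hd | hd⟩
      · exact absurd (show psi n i = psi n i' + 1 by linear_combination hd)
          (psi_ne_odd _ _)
      · exact absurd (show psi n i' = psi n i + 1 by linear_combination hd)
          (psi_ne_odd _ _)
    · rintro ⟨hne, hd⟩
      exfalso
      apply hne
      have hii : i = i' := by
        rcases hd with (h | h) | (h | h)
        · exact h
        · rw [← hu, ← hv]; exact h
        · exact h.symm
        · rw [← hu, ← hv]; exact h.symm
      exact Subtype.ext (by rw [Prod.mk.injEq]; exact ⟨hii, by rw [hu, hv, hii]⟩)
  · -- j = i, j' = i' - 1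
    replace hu : j = i := hu
    replace hv : j' = i' - 1 := hv
    rw [F_eq_a i j _ hu, F_eq_b hn i' j' _ hv]
    constructor
    · rintro ⟨-, hd | hd⟩
      · have hii : i = i' := psi_inj (by linear_combination hd)
        refine ⟨fun he => ?_, Or.inl (Or.inl hii)⟩
        have hj : j = j' := congrArg (fun w => w.1.2) he
        apply sub_one_ne hn i
        rw [← hii] at hv
        rw [← hv, ← hj]
        exact hu
      · have hii : i' = i + 1 := psi_inj (by rw [psi_succ hn]; linear_combination hd)
        have hjj : j = j' := by rw [hu, hv, hii]; ring
        refine ⟨fun he => ?_, Or.inl (Or.inr hjj)⟩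
        have hi2 : i = i' := congrArg (fun w => w.1.1) he
        have h1 : i = i + 1 := by rw [← hii]; exact hi2
        exact one_ne_zero (α := ZMod n) (by linear_combination -h1)
    · rintro ⟨hne, hd⟩
      refine ⟨fun he => psi_ne_odd' (n := n) i i' he, ?_⟩
      have key : i = i' ∨ i' = i + 1 := by
        rcases hd with (h | h) | (h | h)
        · exact Or.inl h
        · refine Or.inr ?_
          have : i = i' - 1 := by rw [← hu, h]; exact hv
          rw [this]; ring
        · exact Or.inl h.symm
        · refine Or.inr ?_
          have : i = i' - 1 := by rw [← hu, ← h]; exact hv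
          rw [this]; ring
      rcases key with h | h
      · exact Or.inl (by rw [h]; ring)
      · exact Or.inr (by rw [h, psi_succ hn]; ring)
  · -- j = i - 1, j' = i'
    replace hu : j = i - 1 := hu
    replace hv : j' = i' := hv
    rw [F_eq_b hn i j _ hu, F_eq_a i' j' _ hv]
    constructor
    · rintro ⟨-, hd | hd⟩
      · have hii : i = i' + 1 := psi_inj (by rw [psi_succ hn]; linear_combination hd)
        have hjj : j = j' := by rw [hu, hv, hii]; ring
        refine ⟨fun he => ?_, Or.inl (Or.inr hjj)⟩
        have hi2 : i = i' := congrArg (fun w => w.1.1) he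
        have h1 : i' = i' + 1 := by rw [← hii]; exact hi2.symm
        exact one_ne_zero (α := ZMod n) (by linear_combination -h1)
      · have hii : i = i' := psi_inj (by linear_combination -hd)
        refine ⟨fun he => ?_, Or.inl (Or.inl hii)⟩
        have hj : j = j' := congrArg (fun w => w.1.2) he
        apply sub_one_ne hn i'
        rw [hii] at hu
        rw [← hu, hj]
        exact hv
    · rintro ⟨hne, hd⟩
      refine ⟨fun he => psi_ne_odd' (n := n) i' i he.symm, ?_⟩
      have key : i = i' ∨ i = i' + 1 := by
        rcases hd with (h | h) | (h | h)
        · exact Or.inl h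
        · refine Or.inr ?_
          have : i' = i - 1 := by rw [← hv, ← h]; exact hu
          rw [this]; ring
        · exact Or.inl h.symm
        · refine Or.inr ?_
          have : i' = i - 1 := by rw [← hv, h]; exact hu
          rw [this]; ring
      rcases key with h | h
      · exact Or.inr (by rw [h]; ring)
      · exact Or.inl (by rw [h, psi_succ hn]; ring)
  · -- j = i - 1, j' = i' - 1
    replace hu : j = i - 1 := hu
    replace hv : j' = i' - 1 := hv
    rw [F_eq_b hn i j _ hu, F_eq_b hn i' j' _ hv]
    constructor
    · rintro ⟨-, hd | hd⟩
      · exact absurd (show psi n i = psi n i' + 1 by linear_combination hd)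
          (psi_ne_odd _ _)
      · exact absurd (show psi n i' = psi n i + 1 by linear_combination hd)
          (psi_ne_odd _ _)
    · rintro ⟨hne, hd⟩
      exfalso
      apply hne
      have hii : i = i' := by
        rcases hd with (h | h) | (h | h)
        · exact h
        · have hjj : j = j' := h
          rw [hu, hv] at hjj
          linear_combination hjj
        · exact h.symm
        · have hjj : j = j' := h.symm
          rw [hu, hv] at hjj
          linear_combination hjj
      exact Subtype.ext (by rw [Prod.mk.injEq]; exact ⟨hii, by rw [hu, hv, hii]⟩)
end

section
/- Let Γ = (X, 𝒞, O) be a compatibility scenario and B a behavior for Γ. For each x ∈ X let μ(x) be the maximum, over all couplings of the single-measurement marginal distributions of x obtained from the contexts containing x, of the probability that all coordinates are equal; and for an extended global distribution q consistent with B let m^q(x) be the q-probability that all copies of x receive the same outcome. Define M_u(B) = ∑_{x ∈ X} μ(x) − sup_q ∑_{x ∈ X} m^q(x), where the supremum is over all extended global distributions q consistent with B. Then M_u(B) ≥ 0, and M_u(B) = 0 if and only if B has a maximally noncontextual description. -/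
/-- The extended measurement set `𝒳 = {(x, C) : C ∈ 𝒞, x ∈ C}` of a scenario. -/
abbrev EMeas {X : Type*} (𝒞 : Finset (Finset X)) : Type _ :=
  {v : X × Finset X // v.2 ∈ 𝒞 ∧ v.1 ∈ v.2}

/-- The copies of a measurement `x`: the contexts of `𝒞` containing `x`. -/
abbrev Copies {X : Type*} (𝒞 : Finset (Finset X)) (x : X) : Type _ :=
  {C : Finset X // C ∈ 𝒞 ∧ x ∈ C}

variable {X O : Type*} [Fintype X] [DecidableEq X] [Fintype O] [DecidableEq O]

/-- The single-measurement marginal of `x` computed from the distribution `B C`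
of a context `C` containing `x`. -/
noncomputable def singleMarg (B : (C : Finset X) → ({y // y ∈ C} → O) → ℝ)
    (C : Finset X) {x : X} (hx : x ∈ C) : O → ℝ :=
  fun o => ∑ f : {y // y ∈ C} → O, if f ⟨x, hx⟩ = o then B C f else 0

/-- `r` is a coupling of the single-measurement marginals of `x` across the
contexts containing `x`. -/
def IsCouplingCopies (𝒞 : Finset (Finset X)) (B : (C : Finset X) → ({y // y ∈ C} → O) → ℝ)
    (x : X) (r : (Copies 𝒞 x → O) → ℝ) : Prop :=
  IsProbDist r ∧ ∀ c : Copies 𝒞 x,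
    (fun o => ∑ f : Copies 𝒞 x → O, if f c = o then r f else 0) = singleMarg B c.1 c.2.2

/-- The probability that all copies of `x` receive the same outcome. -/
noncomputable def diagC (𝒞 : Finset (Finset X)) (x : X) (r : (Copies 𝒞 x → O) → ℝ) : ℝ :=
  ∑ f : Copies 𝒞 x → O, if ∀ c c' : Copies 𝒞 x, f c = f c' then r f else 0

/-- The marginal of a distribution `q` on `𝒳 → O` on the type-(i) extended context
`{(x, C) : x ∈ C}` corresponding to a context `C ∈ 𝒞`. -/
noncomputable def ctxMarg (𝒞 : Finset (Finset X)) (q : (EMeas 𝒞 → O) → ℝ)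
    {C : Finset X} (hC : C ∈ 𝒞) : ({y // y ∈ C} → O) → ℝ :=
  fun f => ∑ g : EMeas 𝒞 → O,
    if ∀ y : {y // y ∈ C}, g ⟨(y.1, C), hC, y.2⟩ = f y then q g else 0

/-- The marginal of a distribution `q` on `𝒳 → O` on the type-(ii) extended context
consisting of all copies of the measurement `x`. -/
noncomputable def copiesMarg (𝒞 : Finset (Finset X)) (q : (EMeas 𝒞 → O) → ℝ)
    (x : X) : (Copies 𝒞 x → O) → ℝ :=
  fun f => ∑ g : EMeas 𝒞 → O,
    if ∀ c : Copies 𝒞 x, g ⟨(x, c.1), c.2.1, c.2.2⟩ = f c then q g else 0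

/-- `B` has a maximally noncontextual description: there is a probability
distribution on `𝒳 → O` whose marginal on each type-(i) context is `B C` and whose
marginal on the copies of each `x` is a maximal coupling of the single-measurement
marginals of `x`. -/
def HasMaxNCDescription (𝒞 : Finset (Finset X))
    (B : (C : Finset X) → ({y // y ∈ C} → O) → ℝ) : Prop :=
  ∃ q : (EMeas 𝒞 → O) → ℝ, IsProbDist q ∧
    (∀ (C : Finset X) (hC : C ∈ 𝒞), ctxMarg 𝒞 q hC = B C) ∧
    ∀ x : X, IsCouplingCopies 𝒞 B x (copiesMarg 𝒞 q x) ∧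
      ∀ r, IsCouplingCopies 𝒞 B x r → diagC 𝒞 x r ≤ diagC 𝒞 x (copiesMarg 𝒞 q x)


/-- `μ(x)`: the maximal probability, over couplings of the single-measurement
marginals of `x`, that all copies of `x` receive the same outcome. -/
noncomputable def muMax (𝒞 : Finset (Finset X))
    (B : (C : Finset X) → ({y // y ∈ C} → O) → ℝ) (x : X) : ℝ :=
  sSup {t : ℝ | ∃ r, IsCouplingCopies 𝒞 B x r ∧ t = diagC 𝒞 x r}

/-- `M_u(B) = ∑_x μ(x) − sup_q ∑_x m^q(x)`, the supremum being over all extended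
global distributions `q` consistent with `B`. -/
noncomputable def Mu (𝒞 : Finset (Finset X))
    (B : (C : Finset X) → ({y // y ∈ C} → O) → ℝ) : ℝ :=
  (∑ x : X, muMax 𝒞 B x) -
    sSup {t : ℝ | ∃ q : (EMeas 𝒞 → O) → ℝ, IsProbDist q ∧
      (∀ (C : Finset X) (hC : C ∈ 𝒞), ctxMarg 𝒞 q hC = B C) ∧
      t = ∑ x : X, diagC 𝒞 x (copiesMarg 𝒞 q x)}


section Helpers

variable {X O : Type*} [Fintype X] [DecidableEq X] [Fintype O] [DecidableEq O]

/-- Generic marginal collapse: summing out the auxiliary function variable. -/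
lemma sum_marg_collapse {I : Type*} [Fintype I] [DecidableEq I] {G : Type*} [Fintype G]
    (q : G → ℝ) (ev : G → I → O) (c : I) (o : O) :
    ∑ f : I → O, (if f c = o then ∑ g : G, (if (∀ i, ev g i = f i) then q g else 0) else 0)
      = ∑ g : G, if ev g c = o then q g else 0 := by
  have h1 : ∀ f : I → O, (if f c = o then ∑ g : G, (if (∀ i, ev g i = f i) then q g else 0) else 0)
      = ∑ g : G, (if (f c = o ∧ ∀ i, ev g i = f i) then q g else 0) := by
    intro f
    split_ifs with h
    · exact Finset.sum_congr rfl fun g _ => by simp [h]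
    · simp [h]
  rw [Finset.sum_congr rfl fun f _ => h1 f, Finset.sum_comm]
  refine Finset.sum_congr rfl fun g _ => ?_
  have h2 : ∀ f : I → O, (if (f c = o ∧ ∀ i, ev g i = f i) then q g else 0)
      = if f = ev g then (if ev g c = o then q g else 0) else 0 := by
    intro f
    by_cases hf : f = ev g
    · subst hf; simp
    · have : ¬ (∀ i, ev g i = f i) := fun h => hf (funext fun i => (h i).symm)
      simp [this, hf]
  rw [Finset.sum_congr rfl fun f _ => h2 f, Finset.sum_ite_eq' Finset.univ (ev g)]
  simp

lemma sum_marg_total {I : Type*} [Fintype I] [DecidableEq I] {G : Type*} [Fintype G]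
    (q : G → ℝ) (ev : G → I → O) :
    ∑ f : I → O, (∑ g : G, (if (∀ i, ev g i = f i) then q g else 0)) = ∑ g : G, q g := by
  rw [Finset.sum_comm]
  refine Finset.sum_congr rfl fun g _ => ?_
  have h2 : ∀ f : I → O, (if (∀ i, ev g i = f i) then q g else 0)
      = if f = ev g then q g else 0 := by
    intro f
    by_cases hf : f = ev g
    · subst hf; simp
    · have : ¬ (∀ i, ev g i = f i) := fun h => hf (funext fun i => (h i).symm)
      simp [this, hf]
  rw [Finset.sum_congr rfl fun f _ => h2 f, Finset.sum_ite_eq' Finset.univ (ev g)]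
  simp

/-- Conditional sum-product identity over dependent functions. -/
lemma pi_sum_prod_ite {ι : Type*} [Fintype ι] [DecidableEq ι] {κ : ι → Type*}
    [∀ i, Fintype (κ i)] [∀ i, DecidableEq (κ i)]
    (p : ∀ i, κ i → ℝ) (i₀ : ι) (a₀ : κ i₀) :
    ∑ h : ∀ i, κ i, (if h i₀ = a₀ then ∏ i, p i (h i) else 0)
      = (p i₀ a₀) * ∏ i ∈ Finset.univ.erase i₀, ∑ a, p i a := by
  classical
  set p' : ∀ i, κ i → ℝ := fun i a =>
    if h' : i = i₀ then (if (h' ▸ a) = a₀ then p i a else 0) else p i a with hp'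
  have hA : ∀ h : ∀ i, κ i, (if h i₀ = a₀ then ∏ i, p i (h i) else 0) = ∏ i, p' i (h i) := by
    intro h
    have hi0 : p' i₀ (h i₀) = if h i₀ = a₀ then p i₀ (h i₀) else 0 := by
      simp [hp']
    have hne : ∀ i ∈ Finset.univ.erase i₀, p' i (h i) = p i (h i) := by
      intro i hi
      have : i ≠ i₀ := (Finset.mem_erase.1 hi).1
      simp [hp', this]
    rw [← Finset.mul_prod_erase Finset.univ _ (Finset.mem_univ i₀),
        ← Finset.mul_prod_erase Finset.univ (fun i => p' i (h i)) (Finset.mem_univ i₀),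
        hi0, Finset.prod_congr rfl hne]
    split_ifs <;> simp
  rw [Finset.sum_congr rfl fun h _ => hA h, ← Fintype.prod_sum,
      ← Finset.mul_prod_erase Finset.univ _ (Finset.mem_univ i₀)]
  congr 1
  · rw [show (∑ a, p' i₀ a) = ∑ a, (if a = a₀ then p i₀ a else 0) from
      Finset.sum_congr rfl fun a _ => by simp [hp'], Finset.sum_ite_eq' Finset.univ a₀]
    simp
  · refine Finset.prod_congr rfl fun i hi => Finset.sum_congr rfl fun a _ => ?_
    have : i ≠ i₀ := (Finset.mem_erase.1 hi).1
    simp [hp', this]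

/-- The canonical equivalence between `EMeas 𝒞 → O` and context-indexed families. -/
def emeasEquiv (𝒞 : Finset (Finset X)) :
    (EMeas (X := X) 𝒞 → O) ≃ ((C : {C : Finset X // C ∈ 𝒞}) → ({y // y ∈ C.1} → O)) where
  toFun g C y := g ⟨(y.1, C.1), C.2, y.2⟩
  invFun h v := h ⟨v.1.2, v.2.1⟩ ⟨v.1.1, v.2.2⟩
  left_inv _ := rfl
  right_inv _ := rfl

/-- The independent product of the context distributions. -/
noncomputable def prodQ (𝒞 : Finset (Finset X))
    (B : (C : Finset X) → ({y // y ∈ C} → O) → ℝ) : (EMeas 𝒞 → O) → ℝ :=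
  fun g => ∏ C : {C : Finset X // C ∈ 𝒞}, B C.1 (emeasEquiv 𝒞 g C)

lemma prodQ_prob (𝒞 : Finset (Finset X)) (B : (C : Finset X) → ({y // y ∈ C} → O) → ℝ)
    (hB : ∀ C ∈ 𝒞, IsProbDist (B C)) : IsProbDist (prodQ 𝒞 B) := by
  constructor
  · intro g
    exact Finset.prod_nonneg fun C _ => (hB C.1 C.2).1 _
  · rw [show ∑ g, prodQ 𝒞 B g
        = ∑ h : (C : {C : Finset X // C ∈ 𝒞}) → ({y // y ∈ C.1} → O), ∏ C, B C.1 (h C) from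
      Equiv.sum_comp (emeasEquiv 𝒞) (fun h => ∏ C, B C.1 (h C)), ← Fintype.prod_sum]
    exact Finset.prod_eq_one fun C _ => (hB C.1 C.2).2

lemma prodQ_consistent (𝒞 : Finset (Finset X)) (B : (C : Finset X) → ({y // y ∈ C} → O) → ℝ)
    (hB : ∀ C ∈ 𝒞, IsProbDist (B C)) :
    ∀ (C : Finset X) (hC : C ∈ 𝒞), ctxMarg 𝒞 (prodQ 𝒞 B) hC = B C := by
  intro C hC
  funext f
  have step1 : ctxMarg 𝒞 (prodQ 𝒞 B) hC f
      = ∑ g : EMeas 𝒞 → O, (if emeasEquiv 𝒞 g ⟨C, hC⟩ = f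
          then ∏ C', B C'.1 (emeasEquiv 𝒞 g C') else 0) := by
    refine Finset.sum_congr rfl fun g _ => ?_
    congr 1
    simp only [eq_iff_iff]
    constructor
    · intro h; funext y; exact h y
    · intro h y; exact congrFun h y
  rw [step1, Equiv.sum_comp (emeasEquiv 𝒞)
      (fun h => if h ⟨C, hC⟩ = f then ∏ C', B C'.1 (h C') else 0),
    pi_sum_prod_ite (fun C' : {C : Finset X // C ∈ 𝒞} => B C'.1) ⟨C, hC⟩ f]
  rw [Finset.prod_eq_one fun C' _ => (hB C'.1 C'.2).2, mul_one]

/-- The copies-marginal of any consistent extended global distribution is a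
coupling of the single-measurement marginals. -/
lemma copiesMarg_isCoupling (𝒞 : Finset (Finset X))
    (B : (C : Finset X) → ({y // y ∈ C} → O) → ℝ) (q : (EMeas 𝒞 → O) → ℝ)
    (hq : IsProbDist q) (hq2 : ∀ (C : Finset X) (hC : C ∈ 𝒞), ctxMarg 𝒞 q hC = B C)
    (x : X) : IsCouplingCopies 𝒞 B x (copiesMarg 𝒞 q x) := by
  constructor
  · constructor
    · intro f
      exact Finset.sum_nonneg fun g _ => by split_ifs; exacts [hq.1 g, le_refl 0]
    · show ∑ f, copiesMarg 𝒞 q x f = 1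
      unfold copiesMarg
      rw [sum_marg_total q (fun g (c : Copies 𝒞 x) => g ⟨(x, c.1), c.2.1, c.2.2⟩)]
      exact hq.2
  · intro c
    funext o
    show ∑ f : Copies 𝒞 x → O, (if f c = o then copiesMarg 𝒞 q x f else 0)
        = singleMarg B c.1 c.2.2 o
    unfold copiesMarg
    rw [sum_marg_collapse q (fun g (c : Copies 𝒞 x) => g ⟨(x, c.1), c.2.1, c.2.2⟩) c o]
    unfold singleMarg
    rw [show B c.1 = ctxMarg 𝒞 q c.2.1 from (hq2 c.1 c.2.1).symm]
    unfold ctxMarg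
    rw [sum_marg_collapse q (fun g (y : {y // y ∈ c.1}) => g ⟨(y.1, c.1), c.2.1, y.2⟩)
        ⟨x, c.2.2⟩ o]

lemma diagC_le_one (𝒞 : Finset (Finset X)) (x : X) (r : (Copies 𝒞 x → O) → ℝ)
    (hr : IsProbDist r) : diagC 𝒞 x r ≤ 1 := by
  rw [← hr.2]
  refine Finset.sum_le_sum fun f _ => ?_
  split_ifs
  · exact le_refl _
  · exact hr.1 f

lemma bddAbove_diag_set (𝒞 : Finset (Finset X))
    (B : (C : Finset X) → ({y // y ∈ C} → O) → ℝ) (x : X) :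
    BddAbove {t : ℝ | ∃ r, IsCouplingCopies 𝒞 B x r ∧ t = diagC 𝒞 x r} := by
  refine ⟨1, ?_⟩
  rintro t ⟨r, hr, rfl⟩
  exact diagC_le_one 𝒞 x r hr.1

lemma diag_le_muMax (𝒞 : Finset (Finset X))
    (B : (C : Finset X) → ({y // y ∈ C} → O) → ℝ) (x : X)
    (r : (Copies 𝒞 x → O) → ℝ) (hr : IsCouplingCopies 𝒞 B x r) :
    diagC 𝒞 x r ≤ muMax 𝒞 B x :=
  le_csSup (bddAbove_diag_set 𝒞 B x) ⟨r, hr, rfl⟩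

end Helpers

/-- `M_u(B) ≥ 0`, and `M_u(B) = 0` iff `B` has a maximally
noncontextual description. -/
theorem Mu_nonneg_and_eq_zero_iff_maxNCDescription
    (𝒞 : Finset (Finset X)) (B : (C : Finset X) → ({y // y ∈ C} → O) → ℝ)
    (hB : ∀ C ∈ 𝒞, IsProbDist (B C)) :
    0 ≤ Mu 𝒞 B ∧ (Mu 𝒞 B = 0 ↔ HasMaxNCDescription 𝒞 B) := by
  classical
  set K : Set ((EMeas 𝒞 → O) → ℝ) :=
    {q | IsProbDist q ∧ ∀ (C : Finset X) (hC : C ∈ 𝒞), ctxMarg 𝒞 q hC = B C} with hK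
  set F : ((EMeas 𝒞 → O) → ℝ) → ℝ :=
    fun q => ∑ x : X, diagC 𝒞 x (copiesMarg 𝒞 q x) with hF
  set Sq : Set ℝ := {t : ℝ | ∃ q : (EMeas 𝒞 → O) → ℝ, IsProbDist q ∧
      (∀ (C : Finset X) (hC : C ∈ 𝒞), ctxMarg 𝒞 q hC = B C) ∧
      t = ∑ x : X, diagC 𝒞 x (copiesMarg 𝒞 q x)} with hSq
  have hMu : Mu 𝒞 B = (∑ x : X, muMax 𝒞 B x) - sSup Sq := rfl
  have hPmem : prodQ 𝒞 B ∈ K := ⟨prodQ_prob 𝒞 B hB, prodQ_consistent 𝒞 B hB⟩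
  have hSq_ne : Sq.Nonempty := ⟨F (prodQ 𝒞 B), prodQ 𝒞 B, hPmem.1, hPmem.2, rfl⟩
  have hbound : ∀ t ∈ Sq, t ≤ ∑ x : X, muMax 𝒞 B x := by
    rintro t ⟨q, hq1, hq2, rfl⟩
    exact Finset.sum_le_sum fun x _ => diag_le_muMax 𝒞 B x _
      (copiesMarg_isCoupling 𝒞 B q hq1 hq2 x)
  have hS_le : sSup Sq ≤ ∑ x : X, muMax 𝒞 B x := csSup_le hSq_ne hbound
  have hSq_bdd : BddAbove Sq := ⟨∑ x : X, muMax 𝒞 B x, hbound⟩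
  -- compactness of K and continuity of F
  have hFc : Continuous F := by
    rw [hF]; unfold diagC copiesMarg
    refine continuous_finset_sum _ fun x _ => continuous_finset_sum _ fun f _ => ?_
    split_ifs
    · exact continuous_finset_sum _ fun g _ => by
        split_ifs
        · exact continuous_apply g
        · exact continuous_const
    · exact continuous_const
  have hctxc : ∀ (C : {C : Finset X // C ∈ 𝒞}) (f : {y // y ∈ C.1} → O),
      Continuous fun q : (EMeas 𝒞 → O) → ℝ => ctxMarg 𝒞 q C.2 f := by
    intro C f
    unfold ctxMarg
    refine continuous_finset_sum _ fun g _ => ?_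
    split_ifs
    · exact continuous_apply g
    · exact continuous_const
  have hKcl : IsClosed K := by
    have hKeq : K = ((⋂ g : EMeas 𝒞 → O, {q : (EMeas 𝒞 → O) → ℝ | 0 ≤ q g}) ∩
        {q : (EMeas 𝒞 → O) → ℝ | ∑ g, q g = 1}) ∩
        ⋂ (C : {C : Finset X // C ∈ 𝒞}) (f : {y // y ∈ C.1} → O),
          {q : (EMeas 𝒞 → O) → ℝ | ctxMarg 𝒞 q C.2 f = B C.1 f} := by
      ext q
      simp only [hK, Set.mem_setOf_eq, Set.mem_inter_iff, Set.mem_iInter, IsProbDist]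
      constructor
      · rintro ⟨⟨h1, h2⟩, h3⟩
        exact ⟨⟨h1, h2⟩, fun C f => congrFun (h3 C.1 C.2) f⟩
      · rintro ⟨⟨h1, h2⟩, h3⟩
        exact ⟨⟨h1, h2⟩, fun C hC => funext fun f => h3 ⟨C, hC⟩ f⟩
    rw [hKeq]
    refine IsClosed.inter (IsClosed.inter ?_ ?_) ?_
    · exact isClosed_iInter fun g => isClosed_le continuous_const (continuous_apply g)
    · exact isClosed_eq (continuous_finset_sum _ fun g _ => continuous_apply g) continuous_const
    · exact isClosed_iInter fun C => isClosed_iInter fun f =>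
        isClosed_eq (hctxc C f) continuous_const
  have hKcpt : IsCompact K := by
    refine (isCompact_univ_pi fun _ : EMeas 𝒞 → O => isCompact_Icc (a := (0:ℝ)) (b := 1)).of_isClosed_subset hKcl ?_
    rintro q ⟨⟨h1, h2⟩, -⟩ g -
    refine ⟨h1 g, ?_⟩
    calc q g ≤ ∑ g', q g' := Finset.single_le_sum (fun g' _ => h1 g') (Finset.mem_univ g)
      _ = 1 := h2
  obtain ⟨q0, hq0K, hq0max⟩ := hKcpt.exists_isMaxOn ⟨prodQ 𝒞 B, hPmem⟩ hFc.continuousOn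
  have hSup_eq : sSup Sq = F q0 := by
    refine IsGreatest.csSup_eq ⟨⟨q0, hq0K.1, hq0K.2, rfl⟩, ?_⟩
    rintro t ⟨q, h1, h2, rfl⟩
    exact hq0max (⟨h1, h2⟩ : q ∈ K)
  refine ⟨by rw [hMu]; exact sub_nonneg.2 hS_le, ?_, ?_⟩
  · -- Mu = 0 → description
    intro h0
    have hFq0 : F q0 = ∑ x : X, muMax 𝒞 B x := by
      have := sub_eq_zero.1 (hMu ▸ h0)
      rw [hSup_eq] at this
      exact this.symm
    have hcoup : ∀ x : X, IsCouplingCopies 𝒞 B x (copiesMarg 𝒞 q0 x) :=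
      fun x => copiesMarg_isCoupling 𝒞 B q0 hq0K.1 hq0K.2 x
    have heach : ∀ x ∈ Finset.univ (α := X),
        diagC 𝒞 x (copiesMarg 𝒞 q0 x) = muMax 𝒞 B x :=
      (Finset.sum_eq_sum_iff_of_le fun x _ => diag_le_muMax 𝒞 B x _ (hcoup x)).1 hFq0
    refine ⟨q0, hq0K.1, hq0K.2, fun x => ⟨hcoup x, fun r hr => ?_⟩⟩
    rw [heach x (Finset.mem_univ x)]
    exact diag_le_muMax 𝒞 B x r hr
  · -- description → Mu = 0
    rintro ⟨q, hq1, hq2, hq3⟩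
    have hμ : ∀ x : X, muMax 𝒞 B x = diagC 𝒞 x (copiesMarg 𝒞 q x) := by
      intro x
      refine IsGreatest.csSup_eq ⟨⟨_, (hq3 x).1, rfl⟩, ?_⟩
      rintro t ⟨r, hr, rfl⟩
      exact (hq3 x).2 r hr
    have hmem : F q ∈ Sq := ⟨q, hq1, hq2, rfl⟩
    have h1 : (∑ x : X, muMax 𝒞 B x) ≤ sSup Sq := by
      have : (∑ x : X, muMax 𝒞 B x) = F q := Finset.sum_congr rfl fun x _ => hμ x
      rw [this]
      exact le_csSup hSq_bdd hmem
    rw [hMu]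
    exact sub_eq_zero.2 (le_antisymm h1 hS_le)
end

section
/- Let Γ = (X, 𝒞, O) be a compatibility scenario and B a behavior for Γ such that for each context C ∈ 𝒞 the distribution B(C) has full support (B(C)(a) > 0 for all a : C → O). Define E_u(B) = (1/|𝒞|) · inf{ ∑_{C ∈ 𝒞} D_KL(B(C) ‖ B^{NC}(C)) : B^{NC} a noncontextual behavior }, where D_KL(p ‖ q) = ∑_a p(a) · log(p(a)/q(a)) ∈ [0, ∞] (with the conventions 0·log(0/q) = 0 and p·log(p/0) = ∞ for p > 0). Then E_u(B) = 0 if and only if B is noncontextual. -/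
/-- The Kullback–Leibler divergence `D_KL(p ‖ q) = ∑ a, p a · log (p a / q a)` with
values in `EReal = [−∞, ∞]`, with the conventions `0·log(0/q) = 0` and
`p·log(p/0) = ∞` for `p > 0`. -/
noncomputable def DKL {S : Type*} [Fintype S] (p q : S → ℝ) : EReal :=
  open Classical in
  ∑ a, if p a = 0 then (0 : EReal)
    else if q a = 0 then (⊤ : EReal)
    else ((p a * Real.log (p a / q a) : ℝ) : EReal)

theorem EReal.coe_finset_sum {ι : Type*} (s : Finset ι) (f : ι → ℝ) :
    ((∑ i ∈ s, f i : ℝ) : EReal) = ∑ i ∈ s, (f i : EReal) :=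
  map_sum (⟨⟨Real.toEReal, EReal.coe_zero⟩, EReal.coe_add⟩ : ℝ →+ EReal) f s

open Real in
theorem sub_add_sq_sqrt_sub_sqrt_le_mul_log_div {p q : ℝ} (hp : 0 < p) (hq : 0 < q) :
    p - q + (√p - √q) ^ 2 ≤ p * log (p / q) := by
  have hlog : 1 - √q / √p ≤ log (√p / √q) := by
    simpa [inv_div] using one_sub_inv_le_log_of_pos (div_pos (sqrt_pos.2 hp) (sqrt_pos.2 hq))
  have hsq : log (p / q) = 2 * log (√p / √q) := by
    rw [← sqrt_div hp.le, log_sqrt (div_pos hp hq).le]; ring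
  have hpp : √p * √p = p := mul_self_sqrt hp.le
  have hqq : √q * √q = q := mul_self_sqrt hq.le
  have hdiv : p * (√q / √p) = √p * √q := by
    nth_rewrite 1 [← hpp]; field_simp [(sqrt_pos.2 hp).ne']
  rw [hsq]
  nlinarith

open Real in
theorem abs_sub_lt_of_abs_sqrt_sub_sqrt_lt {p q δ : ℝ} (hp0 : 0 ≤ p) (hp1 : p ≤ 1) (hq : 0 ≤ q)
    (hδ : δ ≤ 1) (h : |√p - √q| < δ) : |q - p| < 3 * δ := by
  have hsum : √q + √p ≤ 3 := by
    have := sqrt_le_one.2 hp1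
    linarith [neg_abs_le (√p - √q)]
  have hfac : q - p = (√q - √p) * (√q + √p) := by
    linear_combination mul_self_sqrt hp0 - mul_self_sqrt hq
  rw [hfac, abs_mul, abs_of_nonneg (add_nonneg (sqrt_nonneg q) (sqrt_nonneg p)), abs_sub_comm]
  nlinarith [abs_nonneg (√p - √q)]

theorem sum_sq_sqrt_sub_sqrt_le_DKL {S : Type*} [Fintype S] {p q : S → ℝ}
    (hp : ∀ a, 0 ≤ p a) (hq : ∀ a, 0 ≤ q a) (hpq : ∑ a, p a = ∑ a, q a) :
    ((∑ a, (√(p a) - √(q a)) ^ 2 : ℝ) : EReal) ≤ DKL p q := by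
  have hsum : ∑ a, (√(p a) - √(q a)) ^ 2 = ∑ a, (p a - q a + (√(p a) - √(q a)) ^ 2) := by
    rw [Finset.sum_add_distrib, Finset.sum_sub_distrib, hpq, sub_self, zero_add]
  rw [hsum, EReal.coe_finset_sum, DKL]
  refine Finset.sum_le_sum fun a _ => ?_
  split_ifs with hpa hqa
  · simp [hpa, Real.sq_sqrt (hq a)]
  · exact le_top
  · exact EReal.coe_le_coe_iff.2 <| sub_add_sq_sqrt_sub_sqrt_le_mul_log_div
      ((hp a).lt_of_ne' hpa) ((hq a).lt_of_ne' hqa)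

theorem DKL_nonneg {S : Type*} [Fintype S] {p q : S → ℝ} (hp : IsProbDist p)
    (hq : IsProbDist q) : 0 ≤ DKL p q :=
  (EReal.coe_nonneg.2 (Finset.sum_nonneg fun _ _ => sq_nonneg _)).trans
    (sum_sq_sqrt_sub_sqrt_le_DKL hp.1 hq.1 (hp.2.trans hq.2.symm))

@[simp]
theorem DKL_self {S : Type*} [Fintype S] (p : S → ℝ) : DKL p p = 0 := by
  simp +contextual [DKL]

theorem abs_sub_lt_of_DKL_lt {S : Type*} [Fintype S] {p q : S → ℝ} (hp : IsProbDist p)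
    (hq : IsProbDist q) {δ : ℝ} (hδ0 : 0 < δ) (hδ1 : δ ≤ 1) (h : DKL p q < (δ ^ 2 : ℝ))
    (a : S) : |q a - p a| < 3 * δ := by
  have hsq : (√(p a) - √(q a)) ^ 2 < δ ^ 2 := by
    have hle := Finset.single_le_sum (fun b _ => sq_nonneg (√(p b) - √(q b)))
      (Finset.mem_univ a)
    exact_mod_cast (EReal.coe_le_coe_iff.2 hle).trans_lt
      ((sum_sq_sqrt_sub_sqrt_le_DKL hp.1 hq.1 (hp.2.trans hq.2.symm)).trans_lt h)
  have hpa : p a ≤ 1 := hp.2 ▸ Finset.single_le_sum (fun b _ => hp.1 b) (Finset.mem_univ a)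
  exact abs_sub_lt_of_abs_sqrt_sub_sqrt_lt (hp.1 a) hpa (hq.1 a) hδ1
    (abs_lt_of_sq_lt_sq hsq hδ0.le)

section Behaviors

variable {X O : Type*} [Fintype X] [DecidableEq X] [Fintype O] [DecidableEq O]

noncomputable def marginals (𝒞 : Finset (Finset X)) (p : (X → O) → ℝ) : BSpace 𝒞 O :=
  fun C f => ∑ g : X → O, if ∀ x : {x // x ∈ C.1}, g x.1 = f x then p g else 0

theorem continuous_marginals (𝒞 : Finset (Finset X)) : Continuous (marginals (O := O) 𝒞) := by
  refine continuous_pi fun C => continuous_pi fun f => continuous_finsetSum _ fun g _ => ?_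
  exact (continuous_apply g).if_const _ continuous_const

theorem isProbDist_marginals (𝒞 : Finset (Finset X)) {p : (X → O) → ℝ} (hp : IsProbDist p)
    (C : {C : Finset X // C ∈ 𝒞}) : IsProbDist (marginals 𝒞 p C) := by
  refine ⟨fun f => Finset.sum_nonneg fun g _ => ?_, ?_⟩
  · split_ifs
    exacts [hp.1 g, le_rfl]
  · simp only [marginals]
    rw [Finset.sum_comm, ← hp.2]
    refine Finset.sum_congr rfl fun g _ => ?_
    simp [← funext_iff]

theorem setOf_NCbehavior_eq_image (𝒞 : Finset (Finset X)) :
    {B : BSpace 𝒞 O | NCbehavior 𝒞 B} = marginals 𝒞 '' stdSimplex ℝ (X → O) := by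
  ext B
  constructor
  · rintro ⟨p, hp, hB⟩
    exact ⟨p, hp, funext₂ fun C f => (hB C f).symm⟩
  · rintro ⟨p, hp, rfl⟩
    exact ⟨p, hp, fun _ _ => rfl⟩

theorem NCbehavior.isProbDist {𝒞 : Finset (Finset X)} {B : BSpace 𝒞 O} (h : NCbehavior 𝒞 B)
    (C : {C : Finset X // C ∈ 𝒞}) : IsProbDist (B C) := by
  obtain ⟨p, hp, rfl⟩ : B ∈ marginals 𝒞 '' stdSimplex ℝ (X → O) :=
    by rw [← setOf_NCbehavior_eq_image]; exact h
  exact isProbDist_marginals 𝒞 hp C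

theorem isClosed_setOf_NCbehavior (𝒞 : Finset (Finset X)) :
    IsClosed {B : BSpace 𝒞 O | NCbehavior 𝒞 B} := by
  rw [setOf_NCbehavior_eq_image]
  exact ((isCompact_stdSimplex ℝ (X → O)).image (continuous_marginals 𝒞)).isClosed

theorem NCbehavior_of_eq_empty [Nonempty O] {𝒞 : Finset (Finset X)} (h : 𝒞 = ∅)
    (B : BSpace 𝒞 O) : NCbehavior 𝒞 B :=
  ⟨Pi.single (Classical.arbitrary (X → O)) 1, single_mem_stdSimplex ℝ _,
    fun C => absurd C.2 (h ▸ Finset.notMem_empty C.1)⟩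

theorem NCbehavior_of_forall_exists_sum_DKL_lt {𝒞 : Finset (Finset X)} {B : BSpace 𝒞 O}
    (hB : ∀ C, IsProbDist (B C))
    (h : ∀ η : ℝ, 0 < η → ∃ Bnc, NCbehavior 𝒞 Bnc ∧ ∑ C, DKL (B C) (Bnc C) < η) :
    NCbehavior 𝒞 B := by
  refine (isClosed_setOf_NCbehavior 𝒞).closure_subset (Metric.mem_closure_iff.2 fun ε hε => ?_)
  set δ := min 1 (ε / 3)
  have hδ0 : 0 < δ := by positivity
  obtain ⟨Bnc, hNC, hlt⟩ := h (δ ^ 2) (by positivity)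
  refine ⟨Bnc, hNC, (dist_pi_lt_iff hε).2 fun C => (dist_pi_lt_iff hε).2 fun a => ?_⟩
  have hC : DKL (B C) (Bnc C) < (δ ^ 2 : ℝ) :=
    (Finset.single_le_sum (fun C' _ => DKL_nonneg (hB C') (hNC.isProbDist C'))
      (Finset.mem_univ C)).trans_lt hlt
  rw [Real.dist_eq, abs_sub_comm]
  calc |Bnc C a - B C a| < 3 * δ :=
        abs_sub_lt_of_DKL_lt (hB C) (hNC.isProbDist C) hδ0 (min_le_left _ _) hC a
    _ ≤ ε := by linarith [min_le_right 1 (ε / 3)]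

end Behaviors

theorem uniform_relative_entropy_faithful_general
    {X O : Type*} [Fintype X] [DecidableEq X] [Fintype O] [DecidableEq O] [Nonempty O]
    (𝒞 : Finset (Finset X)) (B : BSpace 𝒞 O)
    (hB : ∀ C, IsProbDist (B C)) :
    (((𝒞.card : ℝ)⁻¹ : EReal) *
        sInf {t : EReal | ∃ Bnc : BSpace 𝒞 O, NCbehavior 𝒞 Bnc ∧
          t = ∑ C : {C : Finset X // C ∈ 𝒞}, DKL (B C) (Bnc C)} = (0 : EReal)) ↔
      NCbehavior 𝒞 B := by
  set S := {t : EReal | ∃ Bnc : BSpace 𝒞 O, NCbehavior 𝒞 Bnc ∧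
    t = ∑ C : {C : Finset X // C ∈ 𝒞}, DKL (B C) (Bnc C)}
  have hS : ∀ t ∈ S, 0 ≤ t := by
    rintro _ ⟨Bnc, hNC, rfl⟩
    exact Finset.sum_nonneg fun C _ => DKL_nonneg (hB C) (hNC.isProbDist C)
  constructor
  · intro h
    rcases 𝒞.eq_empty_or_nonempty with h𝒞 | h𝒞
    · exact NCbehavior_of_eq_empty h𝒞 B
    have hInf : sInf S = 0 := (mul_eq_zero.1 h).resolve_left
      (EReal.coe_ne_zero.2 (inv_ne_zero (Nat.cast_ne_zero.2 h𝒞.card_pos.ne')))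
    refine NCbehavior_of_forall_exists_sum_DKL_lt hB fun η hη => ?_
    obtain ⟨_, ⟨Bnc, hNC, rfl⟩, hlt⟩ := sInf_lt_iff.1 (hInf ▸ EReal.coe_pos.2 hη)
    exact ⟨Bnc, hNC, hlt⟩
  · intro hNC
    have hInf : sInf S = 0 := le_antisymm (sInf_le ⟨B, hNC, by simp⟩) (le_sInf hS)
    rw [hInf, mul_zero]

/-- for a behavior with full support in each context, the uniform
relative entropy of contextuality
`E_u(B) = (1/|𝒞|) · inf { ∑_C D_KL(B C ‖ B^{NC} C) : B^{NC} noncontextual }`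
vanishes iff `B` is noncontextual. -/
theorem uniform_relative_entropy_faithful
    {X O : Type*} [Fintype X] [DecidableEq X] [Fintype O] [DecidableEq O] [Nonempty O]
    (𝒞 : Finset (Finset X)) (B : BSpace 𝒞 O)
    (hB : ∀ C, IsProbDist (B C))
    (hsupp : ∀ (C : {C : Finset X // C ∈ 𝒞}) (a : {x // x ∈ C.1} → O), 0 < B C a) :
    (((𝒞.card : ℝ)⁻¹ : EReal) *
        sInf {t : EReal | ∃ Bnc : BSpace 𝒞 O, NCbehavior 𝒞 Bnc ∧
          t = ∑ C : {C : Finset X // C ∈ 𝒞}, DKL (B C) (Bnc C)} = (0 : EReal)) ↔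
      NCbehavior 𝒞 B :=
  uniform_relative_entropy_faithful_general 𝒞 B hB
end
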